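/- arXiv:1509.00106 — 10 statements merged into one kernel-verified Lean document; each statement's English description precedes it below -/
import Mathlib

section
/- The smoothed function φ*_γ is convex on ℝⁿ, and for every γ > 0 and all z, z̄ ∈ ℝⁿ one has (γ/2)·‖u*_γ(z) − u*_γ(z̄)‖² ≤ φ*_γ(z) − φ*_γ(z̄) − ⟨u*_γ(z̄), z − z̄⟩ ≤ (1/(2γ))·‖z − z̄‖². -/
open scoped RealInnerProductSpace

theorem stmt_0
    {n : ℕ} (hn : 1 ≤ n)
    (U : Set (EuclideanSpace ℝ (Fin n)))
    (hUne : U.Nonempty) (hUcl : IsClosed U) (hUcx : Convex ℝ U)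
    (φ : EuclideanSpace ℝ (Fin n) → EReal)
    (hφbot : ∀ v, φ v ≠ ⊥)
    (hφlsc : LowerSemicontinuous φ)
    (hφcx : ∀ v w : EuclideanSpace ℝ (Fin n), ∀ a c : ℝ, 0 ≤ a → 0 ≤ c → a + c = 1 →
      φ (a • v + c • w) ≤ (a : EReal) * φ v + (c : EReal) * φ w)
    (hφdom : ∃ v ∈ U, φ v ≠ ⊤)
    (b : EuclideanSpace ℝ (Fin n) → ℝ)
    (hbcont : Continuous b)
    (hbsc : StrongConvexOn U 1 b)
    (ustar : ℝ → EuclideanSpace ℝ (Fin n) → EuclideanSpace ℝ (Fin n))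
    (humem : ∀ γ > (0:ℝ), ∀ z, ustar γ z ∈ U)
    (hufin : ∀ γ > (0:ℝ), ∀ z, φ (ustar γ z) ≠ ⊤)
    (humax : ∀ γ > (0:ℝ), ∀ z, ∀ v ∈ U,
      (⟪z, v⟫ : EReal) - φ v - ((γ * b v : ℝ) : EReal)
        ≤ (⟪z, ustar γ z⟫ : EReal) - φ (ustar γ z) - ((γ * b (ustar γ z) : ℝ) : EReal))
    (φs : ℝ → EuclideanSpace ℝ (Fin n) → ℝ)
    (hφs : ∀ γ z, φs γ z = ⟪z, ustar γ z⟫ - (φ (ustar γ z)).toReal - γ * b (ustar γ z)) :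
    ∀ γ > (0:ℝ),
      ConvexOn ℝ Set.univ (φs γ) ∧
      ∀ z zbar : EuclideanSpace ℝ (Fin n),
        γ / 2 * ‖ustar γ z - ustar γ zbar‖ ^ 2
            ≤ φs γ z - φs γ zbar - ⟪ustar γ zbar, z - zbar⟫ ∧
        φs γ z - φs γ zbar - ⟪ustar γ zbar, z - zbar⟫
            ≤ 1 / (2 * γ) * ‖z - zbar‖ ^ 2 := by
  intro γ hγ
  -- real version of the maximality hypothesis
  have hreal : ∀ z v, v ∈ U → φ v ≠ ⊤ →
      ⟪z, v⟫ - (φ v).toReal - γ * b v ≤ φs γ z := by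
    intro z v hv hvt
    have h1 := humax γ hγ z v hv
    have hu : φ (ustar γ z) ≠ ⊤ := hufin γ hγ z
    rw [show φ v = ((φ v).toReal : EReal) from (EReal.coe_toReal hvt (hφbot v)).symm,
        show φ (ustar γ z) = (((φ (ustar γ z)).toReal : ℝ) : EReal) from
          (EReal.coe_toReal hu (hφbot _)).symm] at h1
    rw [← EReal.coe_sub, ← EReal.coe_sub, ← EReal.coe_sub, ← EReal.coe_sub,
        EReal.coe_le_coe_iff] at h1
    rw [hφs]
    linarith
  -- key strong-convexity inequality at the maximizer
  have hkey : ∀ zbar v, v ∈ U → φ v ≠ ⊤ →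
      ⟪zbar, v⟫ - (φ v).toReal - γ * b v + γ / 2 * ‖v - ustar γ zbar‖ ^ 2 ≤ φs γ zbar := by
    intro zbar v hv hvt
    have hub : ustar γ zbar ∈ U := humem γ hγ zbar
    have hubf : φ (ustar γ zbar) ≠ ⊤ := hufin γ hγ zbar
    set ub := ustar γ zbar with hubdef
    have hd0 : (0:ℝ) ≤ ‖v - ub‖ ^ 2 := sq_nonneg _
    have main : ∀ t : ℝ, 0 < t → t < 1 →
        ⟪zbar, v⟫ - (φ v).toReal - γ * b v + γ / 2 * ‖v - ub‖ ^ 2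
          ≤ φs γ zbar + γ * t / 2 * ‖v - ub‖ ^ 2 := by
      intro t ht0 ht1
      set w := (1 - t) • ub + t • v with hwdef
      have hwU : w ∈ U := hUcx hub hv (by linarith) ht0.le (by ring)
      have hφw : φ w ≤ (((1 - t) * (φ ub).toReal + t * (φ v).toReal : ℝ) : EReal) := by
        have h := hφcx ub v (1 - t) t (by linarith) ht0.le (by ring)
        calc φ w ≤ ((1 - t : ℝ) : EReal) * φ ub + (t : EReal) * φ v := h
          _ = _ := by
            rw [EReal.coe_add, EReal.coe_mul, EReal.coe_mul,
                EReal.coe_toReal hubf (hφbot _), EReal.coe_toReal hvt (hφbot _)]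
      have hφwt : φ w ≠ ⊤ := ne_top_of_le_ne_top (EReal.coe_ne_top _) hφw
      have hφwr : (φ w).toReal ≤ (1 - t) * (φ ub).toReal + t * (φ v).toReal := by
        have h2 := EReal.toReal_le_toReal hφw (hφbot w) (EReal.coe_ne_top _)
        rwa [EReal.toReal_coe] at h2
      have hbw : b w ≤ (1 - t) * b ub + t * b v - (1 - t) * t * (1 / 2 * ‖ub - v‖ ^ 2) := by
        have h3 := hbsc.2 hub hv (by linarith : (0:ℝ) ≤ 1 - t) ht0.le (by ring)
        simpa [smul_eq_mul] using h3
      have hmax := hreal zbar w hwU hφwt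
      have hinner : ⟪zbar, w⟫ = (1 - t) * ⟪zbar, ub⟫ + t * ⟪zbar, v⟫ := by
        rw [hwdef, inner_add_right, real_inner_smul_right, real_inner_smul_right]
      have hφsval : φs γ zbar = ⟪zbar, ub⟫ - (φ ub).toReal - γ * b ub := hφs γ zbar
      have hnorm : ‖ub - v‖ = ‖v - ub‖ := norm_sub_rev _ _
      rw [hinner, hφsval] at hmax
      rw [hnorm] at hbw
      have hbw' : γ * b w ≤ γ * ((1 - t) * b ub + t * b v - (1 - t) * t * (1 / 2 * ‖v - ub‖ ^ 2)) :=
        mul_le_mul_of_nonneg_left hbw hγ.le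
      have step : t * (⟪zbar, v⟫ - (φ v).toReal - γ * b v + γ * (1 - t) / 2 * ‖v - ub‖ ^ 2)
          ≤ t * (⟪zbar, ub⟫ - (φ ub).toReal - γ * b ub) := by nlinarith
      have step2 := le_of_mul_le_mul_left step ht0
      rw [hφsval]
      nlinarith
    refine le_of_forall_pos_le_add ?_
    intro ε hε
    set d := ‖v - ub‖ ^ 2 with hddef
    have hden : (0:ℝ) < γ * d + 1 := by nlinarith
    set t := min (1/2 : ℝ) (ε / (γ * d + 1)) with htdef
    have ht0 : 0 < t := lt_min (by norm_num) (div_pos hε hden)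
    have ht1 : t < 1 := lt_of_le_of_lt (min_le_left _ _) (by norm_num)
    have htle : t ≤ ε / (γ * d + 1) := min_le_right _ _
    have htle' : t * (γ * d + 1) ≤ ε := by
      rw [← le_div_iff₀ hden]; exact htle
    have hm := main t ht0 ht1
    have hsmall : γ * t / 2 * d ≤ ε := by
      nlinarith [mul_nonneg (mul_nonneg hγ.le ht0.le) hd0]
    linarith
  constructor
  · refine ⟨convex_univ, ?_⟩
    intro z1 _ z2 _ a c ha hc hac
    have hu : ustar γ (a • z1 + c • z2) ∈ U := humem γ hγ _
    have huf : φ (ustar γ (a • z1 + c • z2)) ≠ ⊤ := hufin γ hγ _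
    set u := ustar γ (a • z1 + c • z2) with hudef
    have h1 := hreal z1 u hu huf
    have h2 := hreal z2 u hu huf
    have hinner : ⟪a • z1 + c • z2, u⟫ = a * ⟪z1, u⟫ + c * ⟪z2, u⟫ := by
      rw [inner_add_left, real_inner_smul_left, real_inner_smul_left]
    rw [hφs]
    simp only [smul_eq_mul, ← hudef]
    rw [hinner]
    have key : a * ((φ u).toReal + γ * b u) + c * ((φ u).toReal + γ * b u)
        = (φ u).toReal + γ * b u := by rw [← add_mul, hac, one_mul]
    nlinarith [mul_le_mul_of_nonneg_left h1 ha, mul_le_mul_of_nonneg_left h2 hc, key]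
  · intro z zbar
    set u := ustar γ z with hudef
    set ub := ustar γ zbar with hubdef
    have hφsz : φs γ z = ⟪z, u⟫ - (φ u).toReal - γ * b u := hφs γ z
    have hφszb : φs γ zbar = ⟪zbar, ub⟫ - (φ ub).toReal - γ * b ub := hφs γ zbar
    have hinner1 : ⟪ub, z - zbar⟫ = ⟪z, ub⟫ - ⟪zbar, ub⟫ := by
      rw [inner_sub_right, real_inner_comm ub z, real_inner_comm ub zbar]
    constructor
    · have hk := hkey z ub (humem γ hγ zbar) (hufin γ hγ zbar)
      rw [← hudef] at hk
      rw [hφsz] at hk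
      have hnorm : ‖ub - u‖ = ‖u - ub‖ := norm_sub_rev _ _
      rw [hnorm] at hk
      rw [hφsz, hφszb, hinner1]
      linarith
    · have hk := hkey zbar u (humem γ hγ z) (hufin γ hγ z)
      rw [← hubdef] at hk
      rw [hφszb] at hk
      have hcs : ⟪z - zbar, u - ub⟫ ≤ ‖z - zbar‖ * ‖u - ub‖ := real_inner_le_norm _ _
      have hinner2 : ⟪z - zbar, u - ub⟫ = ⟪z, u⟫ - ⟪zbar, u⟫ - ⟪z, ub⟫ + ⟪zbar, ub⟫ := by
        rw [inner_sub_right, inner_sub_left, inner_sub_left]; ring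
      rw [hinner2] at hcs
      rw [hφsz, hφszb, hinner1]
      have hsq : 0 ≤ (γ * ‖u - ub‖ - ‖z - zbar‖) ^ 2 := sq_nonneg _
      rw [div_mul_eq_mul_div, le_div_iff₀ (by linarith : (0:ℝ) < 2 * γ)]
      nlinarith [mul_le_mul_of_nonneg_left hk hγ.le, mul_le_mul_of_nonneg_left hcs hγ.le]
end

section
/- For every γ > 0, the map z ↦ u*_γ(z) is Lipschitz continuous on ℝⁿ with constant 1/γ, and φ*_γ is differentiable on ℝⁿ with gradient ∇φ*_γ(z) = u*_γ(z); consequently ∇φ*_γ is Lipschitz continuous with constant 1/γ. -/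
/-!
For `z` fixed, `u*_γ(z)` minimizes the `γ`-strongly convex function `v ↦ φ v + γ b v - ⟪z, v⟫`
over `U`, so the objective grows at least quadratically away from it. Comparing the two
minimality conditions at `z₁` and `z₂` gives `γ ‖u₁ - u₂‖² ≤ ⟪z₁ - z₂, u₁ - u₂⟫`, whence the
Lipschitz bound. The value function `φ*_γ` is a supremum of affine functions of `z`, and
`u*_γ(z)` is the slope of the one attained at `z`, so it is a subgradient of `φ*_γ` at `z`;
a convex function with a continuous choice of subgradients is differentiable.
-/

open scoped RealInnerProductSpace
open Set Filter Topology

section NormedSpace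

variable {E : Type*} [NormedAddCommGroup E] [NormedSpace ℝ E] {s t : Set E} {m c : ℝ}
  {f g : E → ℝ} {x y : E}

theorem StrongConvexOn.subset (hf : StrongConvexOn t m f) (hst : s ⊆ t) (hs : Convex ℝ s) :
    StrongConvexOn s m f :=
  ⟨hs, fun _ hx _ hy _ _ ha hb hab => hf.2 (hst hx) (hst hy) ha hb hab⟩

theorem StrongConvexOn.const_mul (hf : StrongConvexOn s m f) (hc : 0 ≤ c) :
    StrongConvexOn s (c * m) fun x => c * f x := by
  refine ⟨hf.1, fun x hx y hy a b ha hb hab => ?_⟩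
  have h := mul_le_mul_of_nonneg_left (hf.2 hx hy ha hb hab) hc
  simp only [smul_eq_mul] at h ⊢
  linarith

theorem ConvexOn.add_strongConvexOn (hf : ConvexOn ℝ s f) (hg : StrongConvexOn s m g) :
    StrongConvexOn s m (f + g) := by
  simpa [StrongConvexOn] using hf.uniformConvexOn_zero.add hg

theorem StrongConvexOn.add_sq_norm_sub_le_of_isMinOn (hf : StrongConvexOn s m f) (hx : x ∈ s)
    (hmin : IsMinOn f s x) (hy : y ∈ s) : f x + m / 2 * ‖y - x‖ ^ 2 ≤ f y := by
  set C := m / 2 * ‖y - x‖ ^ 2 with hC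
  have hstep : ∀ t ∈ Ioc (0 : ℝ) 1, f x + (1 - t) * C ≤ f y := by
    rintro t ⟨ht₀, ht₁⟩
    have hw := hf.1 hx hy (sub_nonneg.2 ht₁) ht₀.le (sub_add_cancel 1 t)
    have hconv := hf.2 hx hy (sub_nonneg.2 ht₁) ht₀.le (sub_add_cancel 1 t)
    have hle := isMinOn_iff.1 hmin _ hw
    simp only [smul_eq_mul] at hconv
    rw [norm_sub_rev, ← hC] at hconv
    have : t * (f x + (1 - t) * C) ≤ t * f y := by linarith
    exact le_of_mul_le_mul_left this ht₀
  have hlim : Tendsto (fun t : ℝ => f x + (1 - t) * C) (𝓝[>] 0) (𝓝 (f x + C)) := by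
    have hcont : Continuous fun t : ℝ => f x + (1 - t) * C := by fun_prop
    simpa using (hcont.tendsto 0).mono_left nhdsWithin_le_nhds
  exact le_of_tendsto hlim (mem_of_superset (Ioc_mem_nhdsGT one_pos) hstep)

end NormedSpace

section InnerProductSpace

variable {E : Type*} [NormedAddCommGroup E] [InnerProductSpace ℝ E] {S : Set E} {m : ℝ}
  {g : E → ℝ} {u : E → E}

theorem StrongConvexOn.sub_inner (hg : StrongConvexOn S m g) (z : E) :
    StrongConvexOn S m fun v => g v - ⟪z, v⟫ := by
  refine ⟨hg.1, fun x hx y hy a b ha hb hab => ?_⟩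
  have h := hg.2 hx hy ha hb hab
  simp only [smul_eq_mul, inner_add_right, inner_smul_right] at h ⊢
  linarith

theorem norm_le_div_of_mul_sq_le_inner {x y : E} (hm : 0 < m) (h : m * ‖x‖ ^ 2 ≤ ⟪y, x⟫) :
    ‖x‖ ≤ ‖y‖ / m := by
  rcases (norm_nonneg x).eq_or_lt with hx | hx
  · rw [← hx]
    positivity
  · have h' : m * ‖x‖ * ‖x‖ ≤ ‖y‖ * ‖x‖ := by
      rw [mul_assoc, ← sq]
      exact h.trans (real_inner_le_norm y x)
    rw [le_div_iff₀ hm, mul_comm]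
    exact le_of_mul_le_mul_right h' hx

theorem StrongConvexOn.mul_sq_norm_sub_le_inner_of_isMinOn (hg : StrongConvexOn S m g)
    {z₁ z₂ x₁ x₂ : E} (hx₁ : x₁ ∈ S) (hx₂ : x₂ ∈ S)
    (hmin₁ : IsMinOn (fun v => g v - ⟪z₁, v⟫) S x₁)
    (hmin₂ : IsMinOn (fun v => g v - ⟪z₂, v⟫) S x₂) :
    m * ‖x₁ - x₂‖ ^ 2 ≤ ⟪z₁ - z₂, x₁ - x₂⟫ := by
  have h₁ := (hg.sub_inner z₁).add_sq_norm_sub_le_of_isMinOn hx₁ hmin₁ hx₂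
  have h₂ := (hg.sub_inner z₂).add_sq_norm_sub_le_of_isMinOn hx₂ hmin₂ hx₁
  rw [norm_sub_rev] at h₁
  simp only [inner_sub_left, inner_sub_right] at h₁ h₂ ⊢
  linarith

theorem StrongConvexOn.lipschitzWith_of_isMinOn (hg : StrongConvexOn S m g) (hm : 0 < m)
    (hu : ∀ z, u z ∈ S) (hmin : ∀ z, IsMinOn (fun v => g v - ⟪z, v⟫) S (u z)) :
    LipschitzWith (1 / m).toNNReal u :=
  LipschitzWith.of_dist_le' fun z₁ z₂ => by
    rw [dist_eq_norm, dist_eq_norm, one_div_mul_eq_div]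
    exact norm_le_div_of_mul_sq_le_inner hm
      (hg.mul_sq_norm_sub_le_inner_of_isMinOn (hu z₁) (hu z₂) (hmin z₁) (hmin z₂))

theorem add_inner_sub_le_of_isMinOn (hu : ∀ z, u z ∈ S)
    (hmin : ∀ z, IsMinOn (fun v => g v - ⟪z, v⟫) S (u z)) (z w : E) :
    ⟪z, u z⟫ - g (u z) + ⟪u z, w - z⟫ ≤ ⟪w, u w⟫ - g (u w) := by
  have h := isMinOn_iff.1 (hmin w) (u z) (hu z)
  simp only [inner_sub_right, real_inner_comm (u z)] at h ⊢
  linarith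

theorem hasGradientAt_of_forall_add_inner_sub_le [CompleteSpace E] {f : E → ℝ} {f' : E → E}
    {x : E} (hsub : ∀ y z, f y + ⟪f' y, z - y⟫ ≤ f z) (hcont : ContinuousAt f' x) :
    HasGradientAt f (f' x) x := by
  rw [hasGradientAt_iff_isLittleO, Asymptotics.isLittleO_iff]
  intro c hc
  filter_upwards [hcont.eventually (Metric.closedBall_mem_nhds (f' x) hc)] with y hy
  have hlow := hsub x y
  have hup := hsub y x
  have hdiff : ⟪f' y - f' x, y - x⟫ ≤ c * ‖y - x‖ :=
    (real_inner_le_norm _ _).trans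
      (mul_le_mul_of_nonneg_right (mem_closedBall_iff_norm.1 hy) (norm_nonneg _))
  rw [← neg_sub y x, inner_neg_right] at hup
  rw [inner_sub_left] at hdiff
  rw [Real.norm_eq_abs, abs_le]
  constructor <;> linarith [norm_nonneg (y - x), hc.le]

theorem StrongConvexOn.hasGradientAt_of_isMinOn [CompleteSpace E] (hg : StrongConvexOn S m g)
    (hm : 0 < m) (hu : ∀ z, u z ∈ S) (hmin : ∀ z, IsMinOn (fun v => g v - ⟪z, v⟫) S (u z))
    (z : E) : HasGradientAt (fun z => ⟪z, u z⟫ - g (u z)) (u z) z :=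
  hasGradientAt_of_forall_add_inner_sub_le (add_inner_sub_le_of_isMinOn hu hmin)
    (hg.lipschitzWith_of_isMinOn hm hu hmin).continuous.continuousAt

end InnerProductSpace

theorem EReal.coe_sub_sub_coe {x : EReal} (hx : x ≠ ⊤) (hx' : x ≠ ⊥) (a c : ℝ) :
    (a : EReal) - x - c = ((a - x.toReal - c : ℝ) : EReal) := by
  lift x to ℝ using ⟨hx, hx'⟩
  norm_cast

theorem convexOn_toReal_inter_ne_top {E : Type*} [AddCommGroup E] [Module ℝ E] {U : Set E}
    {φ : E → EReal} (hU : Convex ℝ U) (hφbot : ∀ v, φ v ≠ ⊥)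
    (hφcx : ∀ v w : E, ∀ a c : ℝ, 0 ≤ a → 0 ≤ c → a + c = 1 →
      φ (a • v + c • w) ≤ (a : EReal) * φ v + (c : EReal) * φ w) :
    ConvexOn ℝ (U ∩ {v | φ v ≠ ⊤}) fun v => (φ v).toReal := by
  have hle : ∀ ⦃v w : E⦄, φ v ≠ ⊤ → φ w ≠ ⊤ → ∀ ⦃a c : ℝ⦄, 0 ≤ a → 0 ≤ c → a + c = 1 →
      φ (a • v + c • w) ≤ ((a * (φ v).toReal + c * (φ w).toReal : ℝ) : EReal) := by
    intro v w hv hw a c ha hc hac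
    have h := hφcx v w a c ha hc hac
    rwa [← EReal.coe_toReal hv (hφbot v), ← EReal.coe_toReal hw (hφbot w)] at h
  refine ⟨fun v hv w hw a c ha hc hac =>
    ⟨hU hv.1 hw.1 ha hc hac, ne_top_of_le_ne_top (EReal.coe_ne_top _) (hle hv.2 hw.2 ha hc hac)⟩,
    fun v hv w hw a c ha hc hac => ?_⟩
  have h := EReal.toReal_le_toReal (hle hv.2 hw.2 ha hc hac) (hφbot _) (EReal.coe_ne_top _)
  rwa [EReal.toReal_coe] at h

theorem stmt_1_general
    {n : ℕ}
    (U : Set (EuclideanSpace ℝ (Fin n)))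
    (hUcx : Convex ℝ U)
    (φ : EuclideanSpace ℝ (Fin n) → EReal)
    (hφbot : ∀ v, φ v ≠ ⊥)
    (hφcx : ∀ v w : EuclideanSpace ℝ (Fin n), ∀ a c : ℝ, 0 ≤ a → 0 ≤ c → a + c = 1 →
      φ (a • v + c • w) ≤ (a : EReal) * φ v + (c : EReal) * φ w)
    (b : EuclideanSpace ℝ (Fin n) → ℝ)
    (hbsc : StrongConvexOn U 1 b)
    (ustar : ℝ → EuclideanSpace ℝ (Fin n) → EuclideanSpace ℝ (Fin n))
    (humem : ∀ γ > (0:ℝ), ∀ z, ustar γ z ∈ U)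
    (hufin : ∀ γ > (0:ℝ), ∀ z, φ (ustar γ z) ≠ ⊤)
    (humax : ∀ γ > (0:ℝ), ∀ z, ∀ v ∈ U,
      (⟪z, v⟫ : EReal) - φ v - ((γ * b v : ℝ) : EReal)
        ≤ (⟪z, ustar γ z⟫ : EReal) - φ (ustar γ z) - ((γ * b (ustar γ z) : ℝ) : EReal))
    (φs : ℝ → EuclideanSpace ℝ (Fin n) → ℝ)
    (hφs : ∀ γ z, φs γ z = ⟪z, ustar γ z⟫ - (φ (ustar γ z)).toReal - γ * b (ustar γ z))
    :
    ∀ γ > (0:ℝ),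
      LipschitzWith (Real.toNNReal (1/γ)) (ustar γ) ∧
      (∀ z, HasGradientAt (φs γ) (ustar γ z) z) ∧
      LipschitzWith (Real.toNNReal (1/γ)) (fun z => ustar γ z) := by
  intro γ hγ
  set S := U ∩ {v | φ v ≠ ⊤}
  set g := fun v => (φ v).toReal + γ * b v
  have hφ := convexOn_toReal_inter_ne_top hUcx hφbot hφcx
  have hg : StrongConvexOn S γ g := by
    have h := hφ.add_strongConvexOn ((hbsc.subset inter_subset_left hφ.1).const_mul hγ.le)
    rwa [mul_one] at h
  have hu : ∀ z, ustar γ z ∈ S := fun z => ⟨humem γ hγ z, hufin γ hγ z⟩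
  have hmin : ∀ z, IsMinOn (fun v => g v - ⟪z, v⟫) S (ustar γ z) := by
    refine fun z => isMinOn_iff.2 fun v hv => ?_
    have h := humax γ hγ z v hv.1
    rw [EReal.coe_sub_sub_coe hv.2 (hφbot v),
      EReal.coe_sub_sub_coe (hufin γ hγ z) (hφbot _), EReal.coe_le_coe_iff] at h
    linarith
  have hφs_eq : φs γ = fun z => ⟪z, ustar γ z⟫ - g (ustar γ z) :=
    funext fun z => by rw [hφs, sub_sub]
  have hlip := hg.lipschitzWith_of_isMinOn hγ hu hmin
  exact ⟨hlip, fun z => hφs_eq ▸ hg.hasGradientAt_of_isMinOn hγ hu hmin z, hlip⟩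

theorem stmt_1
    {n : ℕ} (hn : 1 ≤ n)
    (U : Set (EuclideanSpace ℝ (Fin n)))
    (hUne : U.Nonempty) (hUcl : IsClosed U) (hUcx : Convex ℝ U)
    (φ : EuclideanSpace ℝ (Fin n) → EReal)
    (hφbot : ∀ v, φ v ≠ ⊥)
    (hφlsc : LowerSemicontinuous φ)
    (hφcx : ∀ v w : EuclideanSpace ℝ (Fin n), ∀ a c : ℝ, 0 ≤ a → 0 ≤ c → a + c = 1 →
      φ (a • v + c • w) ≤ (a : EReal) * φ v + (c : EReal) * φ w)
    (hφdom : ∃ v ∈ U, φ v ≠ ⊤)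
    (b : EuclideanSpace ℝ (Fin n) → ℝ)
    (hbcont : Continuous b)
    (hbsc : StrongConvexOn U 1 b)
    (ustar : ℝ → EuclideanSpace ℝ (Fin n) → EuclideanSpace ℝ (Fin n))
    (humem : ∀ γ > (0:ℝ), ∀ z, ustar γ z ∈ U)
    (hufin : ∀ γ > (0:ℝ), ∀ z, φ (ustar γ z) ≠ ⊤)
    (humax : ∀ γ > (0:ℝ), ∀ z, ∀ v ∈ U,
      (⟪z, v⟫ : EReal) - φ v - ((γ * b v : ℝ) : EReal)
        ≤ (⟪z, ustar γ z⟫ : EReal) - φ (ustar γ z) - ((γ * b (ustar γ z) : ℝ) : EReal))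
    (φs : ℝ → EuclideanSpace ℝ (Fin n) → ℝ)
    (hφs : ∀ γ z, φs γ z = ⟪z, ustar γ z⟫ - (φ (ustar γ z)).toReal - γ * b (ustar γ z))
    :
    ∀ γ > (0:ℝ),
      LipschitzWith (Real.toNNReal (1/γ)) (ustar γ) ∧
      (∀ z, HasGradientAt (φs γ) (ustar γ z) z) ∧
      LipschitzWith (Real.toNNReal (1/γ)) (fun z => ustar γ z) :=
  stmt_1_general U hUcx φ hφbot hφcx b hbsc ustar humem hufin humax φs hφs
end

section
/- For every γ > 0 and every x ∈ ℝ^p one has f_γ(x) ≤ f(x) ≤ f_γ(x) + γ·D_U; in particular f(x) is finite for every x. -/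
open scoped RealInnerProductSpace BigOperators

theorem stmt_4
    {n : ℕ} (hn : 1 ≤ n)
    (U : Set (EuclideanSpace ℝ (Fin n)))
    (hUne : U.Nonempty) (hUcl : IsClosed U) (hUcx : Convex ℝ U)
    (φ : EuclideanSpace ℝ (Fin n) → EReal)
    (hφbot : ∀ v, φ v ≠ ⊥)
    (hφlsc : LowerSemicontinuous φ)
    (hφcx : ∀ v w : EuclideanSpace ℝ (Fin n), ∀ a c : ℝ, 0 ≤ a → 0 ≤ c → a + c = 1 →
      φ (a • v + c • w) ≤ (a : EReal) * φ v + (c : EReal) * φ w)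
    (hφdom : ∃ v ∈ U, φ v ≠ ⊤)
    (b : EuclideanSpace ℝ (Fin n) → ℝ)
    (hbcont : Continuous b)
    (hbsc : StrongConvexOn U 1 b)
    (ustar : ℝ → EuclideanSpace ℝ (Fin n) → EuclideanSpace ℝ (Fin n))
    (humem : ∀ γ > (0:ℝ), ∀ z, ustar γ z ∈ U)
    (hufin : ∀ γ > (0:ℝ), ∀ z, φ (ustar γ z) ≠ ⊤)
    (humax : ∀ γ > (0:ℝ), ∀ z, ∀ v ∈ U,
      (⟪z, v⟫ : EReal) - φ v - ((γ * b v : ℝ) : EReal)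
        ≤ (⟪z, ustar γ z⟫ : EReal) - φ (ustar γ z) - ((γ * b (ustar γ z) : ℝ) : EReal))
    (φs : ℝ → EuclideanSpace ℝ (Fin n) → ℝ)
    (hφs : ∀ γ z, φs γ z = ⟪z, ustar γ z⟫ - (φ (ustar γ z)).toReal - γ * b (ustar γ z))
    {p : ℕ} (hp : 1 ≤ p)
    (A : EuclideanSpace ℝ (Fin n) →L[ℝ] EuclideanSpace ℝ (Fin p))
    (f : EuclideanSpace ℝ (Fin p) → EReal)
    (hf : ∀ x, f x = ⨆ v ∈ U, ((⟪x, A v⟫ : EReal) - φ v))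
    (DU : ℝ)
    (hDUbdd : BddAbove (b '' {v | v ∈ U ∧ φ v ≠ ⊤}))
    (hDU : DU = sSup (b '' {v | v ∈ U ∧ φ v ≠ ⊤}))
    (hbnn : ∀ v ∈ U, 0 ≤ b v)
    :
    ∀ γ > (0:ℝ), ∀ x : EuclideanSpace ℝ (Fin p),
      ((φs γ ((ContinuousLinearMap.adjoint A) x) : ℝ) : EReal) ≤ f x ∧
      f x ≤ ((φs γ ((ContinuousLinearMap.adjoint A) x) + γ * DU : ℝ) : EReal) ∧
      f x ≠ ⊤ ∧ f x ≠ ⊥ := by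
  intro γ hγ x
  set z := (ContinuousLinearMap.adjoint A) x with hz
  set u := ustar γ z with huu
  have hu : u ∈ U := humem γ hγ z
  have hfin : φ u ≠ ⊤ := hufin γ hγ z
  have hφu : ((φ u).toReal : EReal) = φ u := EReal.coe_toReal hfin (hφbot u)
  have hinner : ∀ v, (⟪x, A v⟫ : ℝ) = ⟪z, v⟫ := by
    intro v
    rw [hz, ContinuousLinearMap.adjoint_inner_left]
  -- lower bound
  have hbu : 0 ≤ γ * b u := mul_nonneg hγ.le (hbnn u hu)
  have hlow : ((φs γ z : ℝ) : EReal) ≤ f x := by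
    have h1 : (φs γ z : ℝ) ≤ ⟪z, u⟫ - (φ u).toReal := by
      rw [hφs]; linarith
    have h2 : ((⟪z, u⟫ - (φ u).toReal : ℝ) : EReal) = (⟪z, u⟫ : EReal) - φ u := by
      rw [EReal.coe_sub, hφu]
    calc ((φs γ z : ℝ) : EReal) ≤ ((⟪z, u⟫ - (φ u).toReal : ℝ) : EReal) :=
          EReal.coe_le_coe_iff.mpr h1
      _ = (⟪z, u⟫ : EReal) - φ u := h2
      _ = (⟪x, A u⟫ : EReal) - φ u := by rw [hinner u]
      _ ≤ f x := by
          rw [hf]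
          exact le_iSup₂ (f := fun v (_ : v ∈ U) => (⟪x, A v⟫ : EReal) - φ v) u hu
  -- upper bound
  have hhigh : f x ≤ ((φs γ z + γ * DU : ℝ) : EReal) := by
    rw [hf]
    refine iSup₂_le fun v hv => ?_
    by_cases hvt : φ v = ⊤
    · rw [hvt, EReal.sub_top]; exact bot_le
    · have hφv : ((φ v).toReal : EReal) = φ v := EReal.coe_toReal hvt (hφbot v)
      have hbv : b v ≤ DU := by
        rw [hDU]
        exact le_csSup hDUbdd ⟨v, ⟨hv, hvt⟩, rfl⟩
      have hmax := humax γ hγ z v hv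
      rw [← hφv, ← hφu, ← EReal.coe_sub, ← EReal.coe_sub, ← EReal.coe_sub,
        ← EReal.coe_sub] at hmax
      have hmax' : ⟪z, v⟫ - (φ v).toReal - γ * b v ≤
          ⟪z, u⟫ - (φ u).toReal - γ * b u := EReal.coe_le_coe_iff.mp hmax
      have hreal : ⟪z, v⟫ - (φ v).toReal ≤ φs γ z + γ * DU := by
        rw [hφs]
        nlinarith [hbnn v hv]
      calc (⟪x, A v⟫ : EReal) - φ v = ((⟪z, v⟫ - (φ v).toReal : ℝ) : EReal) := by
            rw [EReal.coe_sub, hφv, hinner v]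
        _ ≤ ((φs γ z + γ * DU : ℝ) : EReal) := EReal.coe_le_coe_iff.mpr hreal
  refine ⟨hlow, hhigh, ?_, ?_⟩
  · exact ne_top_of_le_ne_top (EReal.coe_ne_top _) hhigh
  · exact fun h => (EReal.coe_ne_bot (φs γ z)) (le_antisymm (h ▸ hlow) bot_le)
end

section
/- Let γ > 0, β > 0 and x̂ ∈ ℝ^p, and set x⁺ := prox_{βg}( x̂ − β·A u*_γ(Aᵀx̂) ). Then for every x ∈ ℝ^p (as an inequality in the extended reals): F_γ(x⁺) ≤ ℓ̂(x) + (1/β)·⟨x⁺ − x̂, x − x̂⟩ − (1/2)·(2/β − ‖A‖²/γ)·‖x̂ − x⁺‖², where ℓ̂(x) := f_γ(x̂) + ⟨A u*_γ(Aᵀx̂), x − x̂⟩ + g(x). -/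
open scoped RealInnerProductSpace BigOperators

lemma margin_aux {a c m D : ℝ}
    (hkey : ∀ t : ℝ, t ∈ Set.Ioo (0:ℝ) 1 → a ≤ (1-t)*a + t*c - m/2*((1-t)*t*D)) :
    a + m/2*D ≤ c := by
  have key : ∀ t ∈ Set.Ioo (0:ℝ) 1, a + m/2*((1-t)*D) ≤ c := by
    intro t ht
    have h1 := hkey t ht
    have h3 : t * (a + m/2*((1-t)*D)) ≤ t * c := by nlinarith [h1]
    exact le_of_mul_le_mul_left h3 ht.1
  have htend : Filter.Tendsto (fun t : ℝ => a + m/2*((1-t)*D)) (nhdsWithin 0 (Set.Ioi 0))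
      (nhds (a + m/2*((1-(0:ℝ))*D))) := by
    apply Filter.Tendsto.mono_left _ nhdsWithin_le_nhds
    exact (Continuous.tendsto (by continuity) 0)
  have hev : ∀ᶠ t in nhdsWithin (0:ℝ) (Set.Ioi 0), a + m/2*((1-t)*D) ≤ c := by
    filter_upwards [Ioo_mem_nhdsGT_of_mem (by norm_num : (0:ℝ) ∈ Set.Ico (0:ℝ) 1)] with t ht
    exact key t ht
  have := le_of_tendsto htend hev
  simpa using this

lemma comb_norm_sq {E : Type*} [NormedAddCommGroup E] [InnerProductSpace ℝ E]
    (a c : E) (t : ℝ) :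
    ‖(1-t) • a + t • c‖^2 = (1-t)*‖a‖^2 + t*‖c‖^2 - (1-t)*t*‖a-c‖^2 := by
  have e1 : ∀ w : E, ‖w‖^2 = ⟪w,w⟫ := fun w => (real_inner_self_eq_norm_sq w).symm
  simp only [e1]
  simp only [inner_add_left, inner_add_right, inner_sub_left, inner_sub_right,
    real_inner_smul_left, real_inner_smul_right, real_inner_comm a c]
  ring

lemma ereal_finite_of_le_coe {e : EReal} (hb : e ≠ ⊥) {r : ℝ} (h : e ≤ (r:ℝ)) :
    e = ((e.toReal : ℝ) : EReal) ∧ e.toReal ≤ r := by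
  have ht : e ≠ ⊤ := ne_top_of_le_ne_top (EReal.coe_ne_top r) h
  refine ⟨(EReal.coe_toReal ht hb).symm, ?_⟩
  have h2 := (EReal.coe_toReal ht hb)
  rw [← h2] at h
  exact_mod_cast h

lemma ereal_add_coe_ne_top {e : EReal} (he : e ≠ ⊤) (r : ℝ) : e + (r:EReal) ≠ ⊤ := by
  induction e using EReal.rec with
  | bot => simp
  | coe a => norm_cast; exact EReal.coe_ne_top _
  | top => exact absurd rfl he

lemma strong_opt {n : ℕ} {U : Set (EuclideanSpace ℝ (Fin n))} (hUcx : Convex ℝ U)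
    {φ : EuclideanSpace ℝ (Fin n) → EReal} (hφbot : ∀ v, φ v ≠ ⊥)
    (hφcx : ∀ v w : EuclideanSpace ℝ (Fin n), ∀ a c : ℝ, 0 ≤ a → 0 ≤ c → a + c = 1 →
      φ (a • v + c • w) ≤ (a : EReal) * φ v + (c : EReal) * φ w)
    {b : EuclideanSpace ℝ (Fin n) → ℝ} (hbsc : StrongConvexOn U 1 b)
    {γ : ℝ} (hγ : 0 < γ) (z : EuclideanSpace ℝ (Fin n))
    {u : EuclideanSpace ℝ (Fin n)} (hu : u ∈ U) (hufin : φ u ≠ ⊤)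
    (hmax : ∀ v ∈ U, (⟪z, v⟫ : EReal) - φ v - ((γ * b v : ℝ) : EReal)
        ≤ (⟪z, u⟫ : EReal) - φ u - ((γ * b u : ℝ) : EReal))
    {v : EuclideanSpace ℝ (Fin n)} (hv : v ∈ U) (hvfin : φ v ≠ ⊤) :
    ((φ u).toReal + γ * b u - ⟪z, u⟫) + γ/2*‖u - v‖^2
      ≤ (φ v).toReal + γ * b v - ⟪z, v⟫ := by
  set pu := (φ u).toReal with hpu
  set pv := (φ v).toReal with hpv
  have hφu : φ u = ((pu : ℝ) : EReal) := (EReal.coe_toReal hufin (hφbot u)).symm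
  have hφv : φ v = ((pv : ℝ) : EReal) := (EReal.coe_toReal hvfin (hφbot v)).symm
  apply margin_aux
  intro t ht
  obtain ⟨ht0, ht1⟩ := ht
  set w : EuclideanSpace ℝ (Fin n) := (1-t) • u + t • v with hw
  have hwU : w ∈ U := hUcx hu hv (by linarith) (le_of_lt ht0) (by ring)
  have hcb := hφcx u v (1-t) t (by linarith) (le_of_lt ht0) (by ring)
  rw [hφu, hφv] at hcb
  have hcb' : φ w ≤ (((1-t)*pu + t*pv : ℝ) : EReal) := by
    refine hcb.trans_eq ?_
    norm_cast
  obtain ⟨hφw, hpw⟩ := ereal_finite_of_le_coe (hφbot w) hcb'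
  set pw := (φ w).toReal with hpwdef
  have hb := hbsc.2 hu hv (by linarith : (0:ℝ) ≤ 1-t) (le_of_lt ht0) (by ring)
  simp only [smul_eq_mul] at hb
  have hopt := hmax w hwU
  rw [hφu, hφw] at hopt
  have hopt' : ⟪z, w⟫ - pw - γ * b w ≤ ⟪z, u⟫ - pu - γ * b u := by
    have : ((⟪z, w⟫ - pw - γ * b w : ℝ) : EReal) ≤ ((⟪z, u⟫ - pu - γ * b u : ℝ) : EReal) := by
      push_cast
      exact hopt
    exact_mod_cast this
  have hinner : ⟪z, w⟫ = (1-t) * ⟪z, u⟫ + t * ⟪z, v⟫ := by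
    rw [hw, inner_add_right, real_inner_smul_right, real_inner_smul_right]
  nlinarith [hopt', hpw, hinner, hb, mul_le_mul_of_nonneg_left hb (le_of_lt hγ)]

lemma prox_opt {p : ℕ} {g : EuclideanSpace ℝ (Fin p) → EReal} (hgbot : ∀ y, g y ≠ ⊥)
    (hgcx : ∀ y w : EuclideanSpace ℝ (Fin p), ∀ a c : ℝ, 0 ≤ a → 0 ≤ c → a + c = 1 →
      g (a • y + c • w) ≤ (a : EReal) * g y + (c : EReal) * g w)
    {β : ℝ} (hβ : 0 < β) (v0 : EuclideanSpace ℝ (Fin p))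
    {y : EuclideanSpace ℝ (Fin p)} (hyfin : g y ≠ ⊤)
    (hmin : ∀ w, g y + (((2*β)⁻¹ * ‖y - v0‖^2 : ℝ) : EReal)
        ≤ g w + (((2*β)⁻¹ * ‖w - v0‖^2 : ℝ) : EReal))
    {x : EuclideanSpace ℝ (Fin p)} (hxfin : g x ≠ ⊤) :
    ((g y).toReal + (2*β)⁻¹ * ‖y - v0‖^2) + (1/β)/2*‖y - x‖^2
      ≤ (g x).toReal + (2*β)⁻¹ * ‖x - v0‖^2 := by
  set gy := (g y).toReal with hgy
  set gx := (g x).toReal with hgx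
  have hgyeq : g y = ((gy : ℝ) : EReal) := (EReal.coe_toReal hyfin (hgbot y)).symm
  have hgxeq : g x = ((gx : ℝ) : EReal) := (EReal.coe_toReal hxfin (hgbot x)).symm
  apply margin_aux
  intro t ht
  obtain ⟨ht0, ht1⟩ := ht
  set w : EuclideanSpace ℝ (Fin p) := (1-t) • y + t • x with hw
  have hcb := hgcx y x (1-t) t (by linarith) (le_of_lt ht0) (by ring)
  rw [hgyeq, hgxeq] at hcb
  have hcb' : g w ≤ (((1-t)*gy + t*gx : ℝ) : EReal) := by
    refine hcb.trans_eq ?_; norm_cast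
  obtain ⟨hgw, hpw⟩ := ereal_finite_of_le_coe (hgbot w) hcb'
  set gw := (g w).toReal with hgwdef
  have hm := hmin w
  rw [hgyeq, hgw] at hm
  have hm' : gy + (2*β)⁻¹ * ‖y - v0‖^2 ≤ gw + (2*β)⁻¹ * ‖w - v0‖^2 := by
    have : ((gy + (2*β)⁻¹ * ‖y - v0‖^2 : ℝ) : EReal)
        ≤ ((gw + (2*β)⁻¹ * ‖w - v0‖^2 : ℝ) : EReal) := by push_cast; exact hm
    exact_mod_cast this
  have hq : ‖w - v0‖^2 = (1-t)*‖y - v0‖^2 + t*‖x - v0‖^2 - (1-t)*t*‖y - x‖^2 := by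
    have h1 : w - v0 = (1-t) • (y - v0) + t • (x - v0) := by
      rw [hw]; module
    have h2 : (y - v0) - (x - v0) = y - x := by abel
    rw [h1, comb_norm_sq, h2]
  have hqs : (2*β)⁻¹ = (1/β)/2 := by
    rw [mul_inv]; ring
  rw [hqs] at hm' ⊢
  have hq2 : 1/β/2 * ‖w - v0‖^2
      = 1/β/2 * ((1-t)*‖y - v0‖^2 + t*‖x - v0‖^2 - (1-t)*t*‖y - x‖^2) := by rw [hq]
  linarith [hm', hpw, hq2]
set_option maxHeartbeats 2000000 in
theorem stmt_6
    {n : ℕ} (hn : 1 ≤ n)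
    (U : Set (EuclideanSpace ℝ (Fin n)))
    (hUne : U.Nonempty) (hUcl : IsClosed U) (hUcx : Convex ℝ U)
    (φ : EuclideanSpace ℝ (Fin n) → EReal)
    (hφbot : ∀ v, φ v ≠ ⊥)
    (hφlsc : LowerSemicontinuous φ)
    (hφcx : ∀ v w : EuclideanSpace ℝ (Fin n), ∀ a c : ℝ, 0 ≤ a → 0 ≤ c → a + c = 1 →
      φ (a • v + c • w) ≤ (a : EReal) * φ v + (c : EReal) * φ w)
    (hφdom : ∃ v ∈ U, φ v ≠ ⊤)
    (b : EuclideanSpace ℝ (Fin n) → ℝ)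
    (hbcont : Continuous b)
    (hbsc : StrongConvexOn U 1 b)
    (ustar : ℝ → EuclideanSpace ℝ (Fin n) → EuclideanSpace ℝ (Fin n))
    (humem : ∀ γ > (0:ℝ), ∀ z, ustar γ z ∈ U)
    (hufin : ∀ γ > (0:ℝ), ∀ z, φ (ustar γ z) ≠ ⊤)
    (humax : ∀ γ > (0:ℝ), ∀ z, ∀ v ∈ U,
      (⟪z, v⟫ : EReal) - φ v - ((γ * b v : ℝ) : EReal)
        ≤ (⟪z, ustar γ z⟫ : EReal) - φ (ustar γ z) - ((γ * b (ustar γ z) : ℝ) : EReal))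
    (φs : ℝ → EuclideanSpace ℝ (Fin n) → ℝ)
    (hφs : ∀ γ z, φs γ z = ⟪z, ustar γ z⟫ - (φ (ustar γ z)).toReal - γ * b (ustar γ z))
    {p : ℕ} (hp : 1 ≤ p)
    (A : EuclideanSpace ℝ (Fin n) →L[ℝ] EuclideanSpace ℝ (Fin p))
    (hAnorm : 0 < ‖A‖)
    (g : EuclideanSpace ℝ (Fin p) → EReal)
    (hgbot : ∀ y, g y ≠ ⊥)
    (hgdom : ∃ y, g y ≠ ⊤)
    (hglsc : LowerSemicontinuous g)
    (hgcx : ∀ y w : EuclideanSpace ℝ (Fin p), ∀ a c : ℝ, 0 ≤ a → 0 ≤ c → a + c = 1 →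
      g (a • y + c • w) ≤ (a : EReal) * g y + (c : EReal) * g w)
    (prox : ℝ → EuclideanSpace ℝ (Fin p) → EuclideanSpace ℝ (Fin p))
    (hprox : ∀ β > (0:ℝ), ∀ x y,
      g (prox β x) + (((2*β)⁻¹ * ‖prox β x - x‖^2 : ℝ) : EReal)
        ≤ g y + (((2*β)⁻¹ * ‖y - x‖^2 : ℝ) : EReal))
    (hproxu : ∀ β > (0:ℝ), ∀ x y,
      (∀ w, g y + (((2*β)⁻¹ * ‖y - x‖^2 : ℝ) : EReal)
          ≤ g w + (((2*β)⁻¹ * ‖w - x‖^2 : ℝ) : EReal)) → y = prox β x)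
    (γ β : ℝ) (hγ : 0 < γ) (hβ : 0 < β)
    (xhat xplus : EuclideanSpace ℝ (Fin p))
    (hxplus : xplus = prox β (xhat - β • A (ustar γ ((ContinuousLinearMap.adjoint A) xhat))))
    :
    ∀ x : EuclideanSpace ℝ (Fin p),
      ((φs γ ((ContinuousLinearMap.adjoint A) xplus) : ℝ) : EReal) + g xplus
        ≤ (((φs γ ((ContinuousLinearMap.adjoint A) xhat) + ⟪A (ustar γ ((ContinuousLinearMap.adjoint A) xhat)), x - xhat⟫ : ℝ) : EReal) + g x)
          + (((1/β) * ⟪xplus - xhat, x - xhat⟫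
              - (1/2) * (2/β - ‖A‖^2/γ) * ‖xhat - xplus‖^2 : ℝ) : EReal) := by

  intro x
  set z := (ContinuousLinearMap.adjoint A) xhat with hz
  set u := ustar γ z with hu
  set v0 := xhat - β • A u with hv0
  set zp := (ContinuousLinearMap.adjoint A) xplus with hzp
  set up := ustar γ zp with hup
  have hxp : xplus = prox β v0 := hxplus
  -- finiteness of g xplus
  obtain ⟨y0, hy0⟩ := hgdom
  have hgxp : g xplus ≠ ⊤ := by
    rw [hxp]
    intro htop
    have h2 := hprox β hβ v0 y0
    rw [htop, EReal.top_add_coe] at h2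
    exact ereal_add_coe_ne_top hy0 _ (top_le_iff.mp h2)
  -- Step A : smoothness-type inequality
  have hA : φs γ zp ≤ φs γ z + ⟪A u, xplus - xhat⟫ + ‖A‖^2/(2*γ)*‖xplus - xhat‖^2 := by
    have SO := strong_opt hUcx hφbot hφcx hbsc hγ z (humem γ hγ z) (hufin γ hγ z)
      (fun v hv => humax γ hγ z v hv) (humem γ hγ zp) (hufin γ hγ zp)
    have e1 : φs γ z = ⟪z, u⟫ - (φ u).toReal - γ * b u := hφs γ z
    have e2 : φs γ zp = ⟪zp, up⟫ - (φ up).toReal - γ * b up := hφs γ zp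
    have hsplit : ⟪zp, up⟫ = ⟪z, up⟫ + ⟪zp - z, u⟫ + ⟪zp - z, up - u⟫ := by
      simp only [inner_sub_left, inner_sub_right]; ring
    have hcs : ⟪zp - z, up - u⟫ ≤ ‖zp - z‖ * ‖up - u‖ := real_inner_le_norm _ _
    have hadj : zp - z = (ContinuousLinearMap.adjoint A) (xplus - xhat) := by
      rw [hzp, hz, map_sub]
    have hzz : ‖zp - z‖ ≤ ‖A‖ * ‖xplus - xhat‖ := by
      rw [hadj]
      calc ‖(ContinuousLinearMap.adjoint A) (xplus - xhat)‖
          ≤ ‖ContinuousLinearMap.adjoint A‖ * ‖xplus - xhat‖ :=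
            ContinuousLinearMap.le_opNorm _ _
        _ = ‖A‖ * ‖xplus - xhat‖ := by
            rw [LinearIsometryEquiv.norm_map ContinuousLinearMap.adjoint A]
    have hIu : ⟪zp - z, u⟫ = ⟪A u, xplus - xhat⟫ := by
      rw [hadj, ContinuousLinearMap.adjoint_inner_left]
      exact real_inner_comm _ _
    have key : ‖zp - z‖ * ‖up - u‖ - γ/2 * ‖up - u‖^2 ≤ ‖A‖^2/(2*γ)*‖xplus - xhat‖^2 := by
      rw [show ‖A‖^2/(2*γ)*‖xplus - xhat‖^2 = (‖A‖^2*‖xplus - xhat‖^2)/(2*γ) from by ring,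
        le_div_iff₀ (by linarith : (0:ℝ) < 2*γ)]
      nlinarith [sq_nonneg (‖zp - z‖ - γ*‖up - u‖),
        mul_self_le_mul_self (norm_nonneg (zp - z)) hzz, hγ]
    have hrev : ‖u - up‖ = ‖up - u‖ := norm_sub_rev _ _
    rw [hrev] at SO
    linarith [SO, hcs, key]
  by_cases hgx : g x = ⊤
  · rw [hgx]
    rw [EReal.coe_add_top, EReal.top_add_coe]
    exact le_top
  · -- Step B : prox inequality
    have hmin := fun w => hprox β hβ v0 w
    rw [← hxp] at hmin
    have hB := prox_opt hgbot hgcx hβ v0 hgxp hmin hgx (x := x)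
    -- norm expansions
    have hx1 : x - v0 = (x - xhat) + β • (A u) := by rw [hv0]; abel
    have hx2 : xplus - v0 = (xplus - xhat) + β • (A u) := by rw [hv0]; abel
    have he1 : ‖x - v0‖^2 = ‖x - xhat‖^2 + 2*β*⟪x - xhat, A u⟫ + β^2*‖A u‖^2 := by
      rw [hx1, @norm_add_sq_real, real_inner_smul_right, norm_smul, Real.norm_eq_abs,
        abs_of_pos hβ]
      ring
    have he2 : ‖xplus - v0‖^2 = ‖xplus - xhat‖^2 + 2*β*⟪xplus - xhat, A u⟫ + β^2*‖A u‖^2 := by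
      rw [hx2, @norm_add_sq_real, real_inner_smul_right, norm_smul, Real.norm_eq_abs,
        abs_of_pos hβ]
      ring
    have he3 : ‖xplus - x‖^2 = ‖xplus - xhat‖^2 - 2*⟪xplus - xhat, x - xhat⟫ + ‖x - xhat‖^2 := by
      have h1 : xplus - x = (xplus - xhat) - (x - xhat) := by abel
      rw [h1, @norm_sub_sq_real]
    have he4 : ‖xhat - xplus‖^2 = ‖xplus - xhat‖^2 := by rw [norm_sub_rev]
    have hsym : ⟪x - xhat, A u⟫ = ⟪A u, x - xhat⟫ := real_inner_comm _ _
    have hsym2 : ⟪xplus - xhat, A u⟫ = ⟪A u, xplus - xhat⟫ := real_inner_comm _ _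
    -- combine B with expansions
    have hB2 : (g xplus).toReal + ⟪A u, xplus - xhat⟫
        ≤ (g x).toReal + ⟪A u, x - xhat⟫ + (1/β)*⟪xplus - xhat, x - xhat⟫
          - (1/β)*‖xplus - xhat‖^2 := by
      have hd : (2*β)⁻¹ * ‖x - v0‖^2 - (2*β)⁻¹ * ‖xplus - v0‖^2 - (1/β)/2 * ‖xplus - x‖^2
          = ⟪A u, x - xhat⟫ - ⟪A u, xplus - xhat⟫ + (1/β)*⟪xplus - xhat, x - xhat⟫
            - (1/β)*‖xplus - xhat‖^2 := by
        rw [he1, he2, he3, hsym, hsym2]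
        field_simp
        ring
      linarith [hB, hd]
    -- final identity for the quadratic coefficient
    have hid : -(1/2)*(2/β - ‖A‖^2/γ)*‖xplus - xhat‖^2
        = -(1/β)*‖xplus - xhat‖^2 + ‖A‖^2/(2*γ)*‖xplus - xhat‖^2 := by
      field_simp
      ring
    -- cast goal to reals
    have hgxeq : g x = (((g x).toReal : ℝ) : EReal) := (EReal.coe_toReal hgx (hgbot x)).symm
    have hgxpeq : g xplus = (((g xplus).toReal : ℝ) : EReal) :=
      (EReal.coe_toReal hgxp (hgbot xplus)).symm
    rw [hgxeq, hgxpeq]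
    have hreal : φs γ zp + (g xplus).toReal
        ≤ (φs γ z + ⟪A u, x - xhat⟫ + (g x).toReal)
          + ((1/β) * ⟪xplus - xhat, x - xhat⟫
              - (1/2) * (2/β - ‖A‖^2/γ) * ‖xhat - xplus‖^2) := by
      rw [he4]
      linarith [hA, hB2, hid]
    have : ((φs γ zp + (g xplus).toReal : ℝ) : EReal)
        ≤ (((φs γ z + ⟪A u, x - xhat⟫ + (g x).toReal : ℝ) : EReal)
          + (((1/β) * ⟪xplus - xhat, x - xhat⟫
              - (1/2) * (2/β - ‖A‖^2/γ) * ‖xhat - xplus‖^2 : ℝ) : EReal)) := by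
      rw [← EReal.coe_add]
      exact_mod_cast hreal
    calc ((φs γ zp : ℝ) : EReal) + (((g xplus).toReal : ℝ) : EReal)
        = ((φs γ zp + (g xplus).toReal : ℝ) : EReal) := by rw [EReal.coe_add]
      _ ≤ _ := this
      _ = (((φs γ z + ⟪A u, x - xhat⟫ : ℝ) : EReal) + (((g x).toReal : ℝ) : EReal))
          + (((1/β) * ⟪xplus - xhat, x - xhat⟫
              - (1/2) * (2/β - ‖A‖^2/γ) * ‖xhat - xplus‖^2 : ℝ) : EReal) := by
        rw [← EReal.coe_add]
        norm_cast
end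

section
/- For every γ > 0 and all x̂, x ∈ ℝ^p (in the extended reals): f_γ(x̂) + ⟨A u*_γ(Aᵀx̂), x − x̂⟩ + g(x) ≤ F_γ(x) − (γ/2)·‖u*_γ(Aᵀx) − u*_γ(Aᵀx̂)‖². -/
open scoped RealInnerProductSpace BigOperators

private lemma ereal_cases_aux (x : EReal) (hb : x ≠ ⊥) : x = ⊤ ∨ ∃ r : ℝ, x = (r:EReal) := by
  induction x using EReal.rec with
  | bot => exact absurd rfl hb
  | coe r => exact Or.inr ⟨r, rfl⟩
  | top => exact Or.inl rfl

theorem stmt_7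
    {n : ℕ} (hn : 1 ≤ n)
    (U : Set (EuclideanSpace ℝ (Fin n)))
    (hUne : U.Nonempty) (hUcl : IsClosed U) (hUcx : Convex ℝ U)
    (φ : EuclideanSpace ℝ (Fin n) → EReal)
    (hφbot : ∀ v, φ v ≠ ⊥)
    (hφlsc : LowerSemicontinuous φ)
    (hφcx : ∀ v w : EuclideanSpace ℝ (Fin n), ∀ a c : ℝ, 0 ≤ a → 0 ≤ c → a + c = 1 →
      φ (a • v + c • w) ≤ (a : EReal) * φ v + (c : EReal) * φ w)
    (hφdom : ∃ v ∈ U, φ v ≠ ⊤)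
    (b : EuclideanSpace ℝ (Fin n) → ℝ)
    (hbcont : Continuous b)
    (hbsc : StrongConvexOn U 1 b)
    (ustar : ℝ → EuclideanSpace ℝ (Fin n) → EuclideanSpace ℝ (Fin n))
    (humem : ∀ γ > (0:ℝ), ∀ z, ustar γ z ∈ U)
    (hufin : ∀ γ > (0:ℝ), ∀ z, φ (ustar γ z) ≠ ⊤)
    (humax : ∀ γ > (0:ℝ), ∀ z, ∀ v ∈ U,
      (⟪z, v⟫ : EReal) - φ v - ((γ * b v : ℝ) : EReal)
        ≤ (⟪z, ustar γ z⟫ : EReal) - φ (ustar γ z) - ((γ * b (ustar γ z) : ℝ) : EReal))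
    (φs : ℝ → EuclideanSpace ℝ (Fin n) → ℝ)
    (hφs : ∀ γ z, φs γ z = ⟪z, ustar γ z⟫ - (φ (ustar γ z)).toReal - γ * b (ustar γ z))
    {p : ℕ} (hp : 1 ≤ p)
    (A : EuclideanSpace ℝ (Fin n) →L[ℝ] EuclideanSpace ℝ (Fin p))
    (g : EuclideanSpace ℝ (Fin p) → EReal)
    (hgbot : ∀ y, g y ≠ ⊥)
    (hgdom : ∃ y, g y ≠ ⊤)
    (hglsc : LowerSemicontinuous g)
    (hgcx : ∀ y w : EuclideanSpace ℝ (Fin p), ∀ a c : ℝ, 0 ≤ a → 0 ≤ c → a + c = 1 →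
      g (a • y + c • w) ≤ (a : EReal) * g y + (c : EReal) * g w)
    :
    ∀ γ > (0:ℝ), ∀ xhat x : EuclideanSpace ℝ (Fin p),
      (((φs γ ((ContinuousLinearMap.adjoint A) xhat) + ⟪A (ustar γ ((ContinuousLinearMap.adjoint A) xhat)), x - xhat⟫ : ℝ) : EReal) + g x)
        ≤ (((φs γ ((ContinuousLinearMap.adjoint A) x) : ℝ) : EReal) + g x)
          - ((γ/2 * ‖ustar γ ((ContinuousLinearMap.adjoint A) x) - ustar γ ((ContinuousLinearMap.adjoint A) xhat)‖^2 : ℝ) : EReal) := by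
  intro γ hγ xhat x
  set z := (ContinuousLinearMap.adjoint A) xhat with hzdef
  set z' := (ContinuousLinearMap.adjoint A) x with hz'def
  set uh := ustar γ z with huhdef
  set uu := ustar γ z' with huudef
  obtain ⟨qh, hqh⟩ : ∃ q : ℝ, φ uh = (q : EReal) := by
    rcases ereal_cases_aux (φ uh) (hφbot uh) with h | h
    · exact absurd h (hufin γ hγ z)
    · exact h
  obtain ⟨qu, hqu⟩ : ∃ q : ℝ, φ uu = (q : EReal) := by
    rcases ereal_cases_aux (φ uu) (hφbot uu) with h | h
    · exact absurd h (hufin γ hγ z')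
    · exact h
  set d : ℝ := ‖uh - uu‖^2 with hddef
  have hd0 : 0 ≤ d := by positivity
  have hmemh : uh ∈ U := by rw [huhdef]; exact humem γ hγ z
  have hmemu : uu ∈ U := by rw [huudef]; exact humem γ hγ z'
  set hrh : ℝ := ⟪z', uh⟫ - qh - γ * b uh with hrhdef
  set hru : ℝ := ⟪z', uu⟫ - qu - γ * b uu with hrudef
  clear_value d hrh hru
  have step : ∀ t : ℝ, 0 < t → t < 1 → hrh + γ/2 * (1 - t) * d ≤ hru := by
    intro t ht0 ht1
    have ht0' : (0:ℝ) ≤ t := ht0.le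
    have hc0 : (0:ℝ) ≤ 1 - t := by linarith
    have hsum : t + (1 - t) = 1 := by ring
    set v : EuclideanSpace ℝ (Fin n) := t • uh + (1 - t) • uu with hvdef
    have hvU : v ∈ U := hUcx hmemh hmemu ht0' hc0 hsum
    have hφv : φ v ≤ ((t * qh + (1 - t) * qu : ℝ) : EReal) := by
      have h0 := hφcx uh uu t (1 - t) ht0' hc0 hsum
      rw [hqh, hqu] at h0
      calc φ v ≤ (t : EReal) * (qh : EReal) + ((1 - t : ℝ) : EReal) * (qu : EReal) := h0
        _ = ((t * qh + (1 - t) * qu : ℝ) : EReal) := by norm_cast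
    obtain ⟨qv, hqv⟩ : ∃ q : ℝ, φ v = (q : EReal) := by
      rcases ereal_cases_aux (φ v) (hφbot v) with h | h
      · rw [h] at hφv
        exact absurd (top_le_iff.mp hφv) (EReal.coe_ne_top _)
      · exact h
    have hqvle : qv ≤ t * qh + (1 - t) * qu := by
      rw [hqv] at hφv; exact_mod_cast hφv
    have hbv : b v ≤ t * b uh + (1 - t) * b uu - t * (1 - t) * (1/2 * ‖uh - uu‖^2) := by
      have h0 := hbsc.2 hmemh hmemu ht0' hc0 hsum
      simpa [smul_eq_mul, one_div] using h0
    have hmax := humax γ hγ z' v hvU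
    rw [← huudef] at hmax
    rw [hqv, hqu] at hmax
    have hmaxR : ⟪z', v⟫ - qv - γ * b v ≤ ⟪z', uu⟫ - qu - γ * b uu := by
      have h0 : (((⟪z', v⟫ - qv - γ * b v : ℝ)) : EReal)
          ≤ (((⟪z', uu⟫ - qu - γ * b uu : ℝ)) : EReal) := by
        push_cast
        exact hmax
      exact_mod_cast h0
    have hinner : ⟪z', v⟫ = t * ⟪z', uh⟫ + (1 - t) * ⟪z', uu⟫ := by
      rw [hvdef, inner_add_right, real_inner_smul_right, real_inner_smul_right]
    have hγbv : γ * b v ≤ γ * (t * b uh + (1 - t) * b uu - t * (1 - t) * (1/2 * ‖uh - uu‖^2)) :=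
      mul_le_mul_of_nonneg_left hbv hγ.le
    have key : t * hrh + (1 - t) * hru + γ * (t * (1 - t)) * (d/2) ≤ hru := by
      have h1 : t * hrh + (1 - t) * hru + γ * (t * (1 - t)) * (d/2)
          ≤ ⟪z', v⟫ - qv - γ * b v := by
        rw [hinner, hrhdef, hrudef]
        have hdd : d = ‖uh - uu‖^2 := hddef
        rw [← hdd] at hγbv
        linarith [hqvle, hγbv]
      linarith [h1.trans hmaxR]
    have h5 : t * (hrh + γ/2 * (1 - t) * d) ≤ t * hru := by linarith [key]
    exact le_of_mul_le_mul_left h5 ht0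
  have hkey : hrh + γ/2 * d ≤ hru := by
    by_contra hcon
    push_neg at hcon
    set ε : ℝ := hrh + γ/2 * d - hru with hεdef
    have hε : 0 < ε := by rw [hεdef]; linarith
    have hden : (0:ℝ) < γ * d + 1 := by nlinarith
    set t : ℝ := min (1/2) (ε / (γ * d + 1)) with htdef
    have ht0 : 0 < t := lt_min (by norm_num) (div_pos hε hden)
    have ht1 : t < 1 := lt_of_le_of_lt (min_le_left _ _) (by norm_num)
    have htle : t * (γ * d + 1) ≤ ε := by
      have h0 : t ≤ ε / (γ * d + 1) := min_le_right _ _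
      exact (le_div_iff₀ hden).mp h0
    have hst := step t ht0 ht1
    have hnn : 0 ≤ γ * t * d := mul_nonneg (mul_nonneg hγ.le ht0.le) hd0
    clear_value t ε
    linarith [hst, htle, ht0, hnn]
  have hφsz : φs γ z = ⟪z, uh⟫ - qh - γ * b uh := by
    rw [hφs]; rw [← huhdef, hqh]; simp
  have hφsz' : φs γ z' = ⟪z', uu⟫ - qu - γ * b uu := by
    rw [hφs]; rw [← huudef, hqu]; simp
  have hAinner : (⟪A uh, x - xhat⟫ : ℝ) = ⟪z', uh⟫ - ⟪z, uh⟫ := by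
    rw [real_inner_comm, hzdef, hz'def, ← ContinuousLinearMap.adjoint_inner_left,
      map_sub, inner_sub_left]
  have hnorm : ‖uu - uh‖^2 = d := by rw [hddef, norm_sub_rev]
  have hmain : φs γ z + ⟪A uh, x - xhat⟫ + γ/2 * ‖uu - uh‖^2 ≤ φs γ z' := by
    rw [hφsz, hφsz', hAinner, hnorm]
    have h0 : hrh + γ/2 * d ≤ hru := hkey
    rw [hrhdef, hrudef] at h0
    linarith
  set r1 : ℝ := φs γ z + ⟪A uh, x - xhat⟫ with hr1def
  set r2 : ℝ := φs γ z' with hr2def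
  set c : ℝ := γ/2 * ‖uu - uh‖^2 with hcdef
  clear_value r1 r2 c
  rcases ereal_cases_aux (g x) (hgbot x) with hgx | ⟨s, hgx⟩
  · rw [hgx]
    have h0 : ((r2 : EReal) + ⊤) - (c : EReal) = ⊤ := by simp
    rw [h0]
    exact le_top
  · rw [hgx]
    have hle : r1 + s ≤ (r2 + s) - c := by
      rw [hr1def, hr2def, hcdef]; linarith [hmain]
    calc ((r1 : EReal) + (s : EReal)) = ((r1 + s : ℝ) : EReal) := by norm_cast
      _ ≤ (((r2 + s) - c : ℝ) : EReal) := by exact_mod_cast hle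
      _ = ((r2 : EReal) + (s : EReal)) - (c : EReal) := by norm_cast
end

section
/- For every γ > 0 and all x̂, x ∈ ℝ^p (in the extended reals, where F(x) may equal +∞): f_γ(x̂) + ⟨A u*_γ(Aᵀx̂), x − x̂⟩ + g(x) ≤ F(x) − γ·b(u*_γ(Aᵀx̂)). -/
open scoped RealInnerProductSpace BigOperators

theorem stmt_8
    {n : ℕ} (hn : 1 ≤ n)
    (U : Set (EuclideanSpace ℝ (Fin n)))
    (hUne : U.Nonempty) (hUcl : IsClosed U) (hUcx : Convex ℝ U)
    (φ : EuclideanSpace ℝ (Fin n) → EReal)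
    (hφbot : ∀ v, φ v ≠ ⊥)
    (hφlsc : LowerSemicontinuous φ)
    (hφcx : ∀ v w : EuclideanSpace ℝ (Fin n), ∀ a c : ℝ, 0 ≤ a → 0 ≤ c → a + c = 1 →
      φ (a • v + c • w) ≤ (a : EReal) * φ v + (c : EReal) * φ w)
    (hφdom : ∃ v ∈ U, φ v ≠ ⊤)
    (b : EuclideanSpace ℝ (Fin n) → ℝ)
    (hbcont : Continuous b)
    (hbsc : StrongConvexOn U 1 b)
    (ustar : ℝ → EuclideanSpace ℝ (Fin n) → EuclideanSpace ℝ (Fin n))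
    (humem : ∀ γ > (0:ℝ), ∀ z, ustar γ z ∈ U)
    (hufin : ∀ γ > (0:ℝ), ∀ z, φ (ustar γ z) ≠ ⊤)
    (humax : ∀ γ > (0:ℝ), ∀ z, ∀ v ∈ U,
      (⟪z, v⟫ : EReal) - φ v - ((γ * b v : ℝ) : EReal)
        ≤ (⟪z, ustar γ z⟫ : EReal) - φ (ustar γ z) - ((γ * b (ustar γ z) : ℝ) : EReal))
    (φs : ℝ → EuclideanSpace ℝ (Fin n) → ℝ)
    (hφs : ∀ γ z, φs γ z = ⟪z, ustar γ z⟫ - (φ (ustar γ z)).toReal - γ * b (ustar γ z))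
    {p : ℕ} (hp : 1 ≤ p)
    (A : EuclideanSpace ℝ (Fin n) →L[ℝ] EuclideanSpace ℝ (Fin p))
    (f : EuclideanSpace ℝ (Fin p) → EReal)
    (hf : ∀ x, f x = ⨆ v ∈ U, ((⟪x, A v⟫ : EReal) - φ v))
    (g : EuclideanSpace ℝ (Fin p) → EReal)
    (hgbot : ∀ y, g y ≠ ⊥)
    (hgdom : ∃ y, g y ≠ ⊤)
    (hglsc : LowerSemicontinuous g)
    (hgcx : ∀ y w : EuclideanSpace ℝ (Fin p), ∀ a c : ℝ, 0 ≤ a → 0 ≤ c → a + c = 1 →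
      g (a • y + c • w) ≤ (a : EReal) * g y + (c : EReal) * g w)
    :
    ∀ γ > (0:ℝ), ∀ xhat x : EuclideanSpace ℝ (Fin p),
      (((φs γ ((ContinuousLinearMap.adjoint A) xhat) + ⟪A (ustar γ ((ContinuousLinearMap.adjoint A) xhat)), x - xhat⟫ : ℝ) : EReal) + g x)
        ≤ (f x + g x) - ((γ * b (ustar γ ((ContinuousLinearMap.adjoint A) xhat)) : ℝ) : EReal) := by
 
  intro γ hγ xhat x
  set z := (ContinuousLinearMap.adjoint A) xhat with hz
  set u := ustar γ z with hu
  have hu_mem : u ∈ U := humem γ hγ z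
  have hφu_top : φ u ≠ ⊤ := hufin γ hγ z
  have hφu_bot : φ u ≠ ⊥ := hφbot u
  have hφu : φ u = ((φ u).toReal : EReal) := (EReal.coe_toReal hφu_top hφu_bot).symm
  set r : ℝ := ⟪x, A u⟫ - (φ u).toReal with hr
  set c : ℝ := γ * b u with hc
  have hfr : (r : EReal) ≤ f x := by
    rw [hf x]
    have h1 : ((⟪x, A u⟫ : ℝ) : EReal) - φ u
        ≤ ⨆ v ∈ U, (((⟪x, A v⟫ : ℝ) : EReal) - φ v) :=
      le_biSup (fun v => ((⟪x, A v⟫ : ℝ) : EReal) - φ v) hu_mem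
    calc (r : EReal) = ((⟪x, A u⟫ : ℝ) : EReal) - φ u := by
          rw [hφu, hr]; push_cast; rfl
      _ ≤ _ := h1
  have hLHS : φs γ z + ⟪A u, x - xhat⟫ = r - c := by
    rw [hφs, ← hu]
    have hadj : ⟪z, u⟫ = ⟪xhat, A u⟫ := ContinuousLinearMap.adjoint_inner_left A u xhat
    rw [hadj, inner_sub_right, hr, hc]
    rw [real_inner_comm (A u) x, real_inner_comm (A u) xhat]
    ring
  rw [hLHS]
  rcases eq_or_ne (g x) ⊤ with hgx | hgx
  · have hfx_bot : f x ≠ ⊥ := fun h => by simp [h] at hfr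
    rw [hgx]
    have h2 : f x + ⊤ = ⊤ := EReal.add_top_of_ne_bot hfx_bot
    rw [h2]
    rw [EReal.top_sub_coe]
    exact le_top
  · have hgR : g x = (((g x).toReal : ℝ) : EReal) := (EReal.coe_toReal hgx (hgbot x)).symm
    rcases eq_or_ne (f x) ⊤ with hfx | hfx
    · rw [hfx, hgR]
      rw [EReal.top_add_coe, EReal.top_sub_coe]
      exact le_top
    · have hfx_bot : f x ≠ ⊥ := fun h => by simp [h] at hfr
      have hfR : f x = (((f x).toReal : ℝ) : EReal) := (EReal.coe_toReal hfx hfx_bot).symm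
      have hrle : r ≤ (f x).toReal := by
        rw [hfR] at hfr; exact_mod_cast hfr
      rw [hgR, hfR]
      have : (((r - c : ℝ)) : EReal) + (((g x).toReal : ℝ) : EReal)
          = (((r - c + (g x).toReal : ℝ)) : EReal) := by push_cast; rfl
      rw [this]
      have h3 : ((((f x).toReal : ℝ)) : EReal) + (((g x).toReal : ℝ) : EReal) - ((c : ℝ) : EReal)
          = ((((f x).toReal + (g x).toReal - c : ℝ)) : EReal) := by push_cast; rfl
      rw [h3]
      exact_mod_cast (by linarith : r - c + (g x).toReal ≤ (f x).toReal + (g x).toReal - c)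
end

section
/- The sequence (γ_k)_{k≥1} defined by γ₁ := M/L and γ_{k+1} := k·γ_k·M/(L·γ_k + M·(k+1)) for k ≥ 1 is positive, and satisfies for every k ≥ 1 the two-sided bound γ₁·M/((L·γ₁ + 2M)·k) ≤ γ_{k+1} ≤ γ₁/(k+1). -/
open scoped RealInnerProductSpace BigOperators

theorem stmt_9 (L M : ℝ) (hL : 0 < L) (hM : 0 < M)
    (γ : ℕ → ℝ) (hγ1 : γ 1 = M / L)
    (hrec : ∀ k : ℕ, 1 ≤ k → γ (k+1) = (k : ℝ) * γ k * M / (L * γ k + M * ((k:ℝ)+1))) :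
    (∀ k : ℕ, 1 ≤ k → 0 < γ k) ∧
    (∀ k : ℕ, 1 ≤ k →
      γ 1 * M / ((L * γ 1 + 2*M) * (k:ℝ)) ≤ γ (k+1) ∧ γ (k+1) ≤ γ 1 / ((k:ℝ)+1)) := by
  have hγ1pos : 0 < γ 1 := by rw [hγ1]; positivity
  have hpos : ∀ k : ℕ, 1 ≤ k → 0 < γ k := by
    intro k hk
    induction k, hk using Nat.le_induction with
    | base => exact hγ1pos
    | succ n hn ih =>
      rw [hrec n hn]
      have hn' : (0:ℝ) < n := by exact_mod_cast hn
      have hden : 0 < L * γ n + M * ((n:ℝ)+1) := by positivity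
      exact div_pos (mul_pos (mul_pos hn' ih) hM) hden
  have hub : ∀ k : ℕ, 1 ≤ k → γ k ≤ γ 1 / k := by
    intro k hk
    induction k, hk using Nat.le_induction with
    | base => simp
    | succ n hn ih =>
      have hn' : (0:ℝ) < n := by exact_mod_cast hn
      have hgn := hpos n hn
      have hden : 0 < L * γ n + M * ((n:ℝ)+1) := by positivity
      rw [hrec n hn]
      push_cast
      rw [div_le_div_iff₀ hden (by positivity)]
      have h2 : γ n * (n:ℝ) ≤ γ 1 := (le_div_iff₀ hn').mp ih
      nlinarith [mul_le_mul_of_nonneg_right h2 (le_of_lt (mul_pos hM (by positivity : (0:ℝ) < (n:ℝ)+1))),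
        mul_pos hγ1pos (mul_pos hL hgn)]
  have hDpos : 0 < L * γ 1 + 2*M := by positivity
  have hlb : ∀ k : ℕ, 1 ≤ k → γ 1 * M / ((L * γ 1 + 2*M) * (k:ℝ)) ≤ γ (k+1) := by
    intro k hk
    induction k, hk using Nat.le_induction with
    | base =>
      apply le_of_eq
      rw [hrec 1 le_rfl]
      push_cast
      ring_nf
    | succ n hn ih =>
      have hn' : (0:ℝ) < n := by exact_mod_cast hn
      have hg : 0 < γ (n+1) := hpos (n+1) (by omega)
      rw [hrec (n+1) (by omega)]
      push_cast
      have hden : 0 < L * γ (n+1) + M * ((n:ℝ)+1+1) := by positivity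
      rw [div_le_div_iff₀ (by positivity) hden]
      have h2 : γ 1 * M ≤ γ (n+1) * ((L * γ 1 + 2*M) * (n:ℝ)) :=
        (div_le_iff₀ (by positivity)).mp ih
      have h1 : (γ 1 * M) * L ≤ M * (L * γ 1 + 2*M) := by nlinarith
      nlinarith [mul_le_mul_of_nonneg_right h2 (show (0:ℝ) ≤ M * ((n:ℝ)+2) by positivity),
        mul_le_mul_of_nonneg_right h1 hg.le, mul_pos hM hg, mul_pos hn' (mul_pos hM hg)]
  refine ⟨hpos, fun k hk => ⟨hlb k hk, ?_⟩⟩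
  have := hub (k+1) (by omega)
  push_cast at this
  exact this
end

section
/- Let τ_k ∈ (0,1] and 0 < γ_{k+1} ≤ γ_k, and let x^k, x̂^k ∈ ℝ^p be arbitrary. Then R_k ≥ (1/2)·(1 − τ_k)·[ γ_{k+1}·τ_k − L_b·(γ_k − γ_{k+1}) ]·‖u*_{γ_{k+1}}(Aᵀx^k) − ū^c‖². -/
open scoped RealInnerProductSpace BigOperators

theorem stmt_11
    {n : ℕ} (hn : 1 ≤ n)
    (U : Set (EuclideanSpace ℝ (Fin n)))
    (hUne : U.Nonempty) (hUcl : IsClosed U) (hUcx : Convex ℝ U)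
    (φ : EuclideanSpace ℝ (Fin n) → EReal)
    (hφbot : ∀ v, φ v ≠ ⊥)
    (hφlsc : LowerSemicontinuous φ)
    (hφcx : ∀ v w : EuclideanSpace ℝ (Fin n), ∀ a c : ℝ, 0 ≤ a → 0 ≤ c → a + c = 1 →
      φ (a • v + c • w) ≤ (a : EReal) * φ v + (c : EReal) * φ w)
    (hφdom : ∃ v ∈ U, φ v ≠ ⊤)
    (b : EuclideanSpace ℝ (Fin n) → ℝ)
    (hbcont : Continuous b)
    (hbsc : StrongConvexOn U 1 b)
    (ustar : ℝ → EuclideanSpace ℝ (Fin n) → EuclideanSpace ℝ (Fin n))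
    (humem : ∀ γ > (0:ℝ), ∀ z, ustar γ z ∈ U)
    (hufin : ∀ γ > (0:ℝ), ∀ z, φ (ustar γ z) ≠ ⊤)
    (humax : ∀ γ > (0:ℝ), ∀ z, ∀ v ∈ U,
      (⟪z, v⟫ : EReal) - φ v - ((γ * b v : ℝ) : EReal)
        ≤ (⟪z, ustar γ z⟫ : EReal) - φ (ustar γ z) - ((γ * b (ustar γ z) : ℝ) : EReal))
    (φs : ℝ → EuclideanSpace ℝ (Fin n) → ℝ)
    (hφs : ∀ γ z, φs γ z = ⟪z, ustar γ z⟫ - (φ (ustar γ z)).toReal - γ * b (ustar γ z))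
    {p : ℕ} (hp : 1 ≤ p)
    (A : EuclideanSpace ℝ (Fin n) →L[ℝ] EuclideanSpace ℝ (Fin p))
    (b' : EuclideanSpace ℝ (Fin n) → EuclideanSpace ℝ (Fin n))
    (Lb : ℝ) (hLb : 1 ≤ Lb)
    (hbgrad : ∀ v, HasGradientAt b (b' v) v)
    (hbgradlip : LipschitzWith (Real.toNNReal Lb) b')
    (uc : EuclideanSpace ℝ (Fin n)) (hucU : uc ∈ U) (hbuc : b uc = 0)
    (hucmin : ∀ v ∈ U, b uc ≤ b v)
    (hbsand : ∀ v ∈ U, (1/2) * ‖v - uc‖^2 ≤ b v ∧ b v ≤ (Lb/2) * ‖v - uc‖^2)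
    (τk γk γk1 : ℝ) (hτk : τk ∈ Set.Ioc (0:ℝ) 1) (hγk1 : 0 < γk1) (hγle : γk1 ≤ γk)
    (xk xhk : EuclideanSpace ℝ (Fin p))
    (Rk : ℝ)
    (hRk : Rk = τk * γk1 * b (ustar γk1 ((ContinuousLinearMap.adjoint A) xhk))
        - (1 - τk) * (γk - γk1) * b (ustar γk1 ((ContinuousLinearMap.adjoint A) xk))
        + ((1 - τk) * γk1 / 2) * ‖ustar γk1 ((ContinuousLinearMap.adjoint A) xk) - ustar γk1 ((ContinuousLinearMap.adjoint A) xhk)‖^2)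
    :
    Rk ≥ (1/2) * (1 - τk) * (γk1 * τk - Lb * (γk - γk1))
        * ‖ustar γk1 ((ContinuousLinearMap.adjoint A) xk) - uc‖^2 := by
  set u1 := ustar γk1 ((ContinuousLinearMap.adjoint A) xhk) with hu1
  set u2 := ustar γk1 ((ContinuousLinearMap.adjoint A) xk) with hu2
  have h1 := hbsand u1 (humem γk1 hγk1 _)
  have h2 := hbsand u2 (humem γk1 hγk1 _)
  set a := ‖u1 - uc‖ with hA
  set c := ‖u2 - u1‖ with hC
  set d := ‖u2 - uc‖ with hD
  rw [hRk]
  clear_value u1 u2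
  have htri : d ≤ c + a := by
    have : u2 - uc = (u2 - u1) + (u1 - uc) := by abel
    rw [hD, this]; exact norm_add_le _ _
  have ha : (0:ℝ) ≤ a := norm_nonneg _
  have hc : (0:ℝ) ≤ c := norm_nonneg _
  have hd : (0:ℝ) ≤ d := norm_nonneg _
  clear_value a c d
  clear hRk humax hφcx hφlsc hφbot hφdom hufin hφs hbsc hbcont hbgrad hbgradlip hucmin humem hu1 hu2 hA hC hD
  obtain ⟨hτ0, hτ1⟩ := hτk
  have hτ1' : (0:ℝ) ≤ 1 - τk := by linarith
  have hsq : d^2 ≤ (c + a)^2 := by nlinarith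
  have key : (1 - τk) * τk * d^2 ≤ τk * a^2 + (1 - τk) * c^2 := by
    have h3 : (1 - τk) * τk * d^2 ≤ (1 - τk) * τk * (c + a)^2 := by
      have := mul_nonneg hτ1' hτ0.le
      nlinarith
    have h4 : (1 - τk) * τk * (c + a)^2 ≤ τk * a^2 + (1 - τk) * c^2 := by
      nlinarith [sq_nonneg (τk * a - (1 - τk) * c)]
    linarith
  have key2 : γk1 / 2 * ((1 - τk) * τk * d^2) ≤ γk1 / 2 * (τk * a^2 + (1 - τk) * c^2) :=
    mul_le_mul_of_nonneg_left key (by positivity)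
  have hb1 : τk * γk1 * (1/2 * a^2) ≤ τk * γk1 * b u1 :=
    mul_le_mul_of_nonneg_left h1.1 (by positivity)
  have hb2 : (1 - τk) * (γk - γk1) * b u2 ≤ (1 - τk) * (γk - γk1) * (Lb/2 * d^2) :=
    mul_le_mul_of_nonneg_left h2.2 (mul_nonneg hτ1' (by linarith))
  linarith [key2, hb1, hb2]
end

section
/- Let c̄ ≥ 1 and γ₁ > 0, and set τ_k := 1/(k + c̄) and γ_{k+1} := γ₁·c̄/(k + c̄) for k ≥ 0 (so γ_k = γ₁·c̄/(k + c̄ − 1) for k ≥ 1). Then for every integer k ≥ 1 and arbitrary x^k, x̂^k ∈ ℝ^p one has (γ_{k+1}/τ_k²)·R_k ≥ −( γ₁²·c̄²·[ (L_b − 1)·(k + c̄) + 1 ]/(k + c̄)² )·D_U, and moreover (1 − τ_k)·γ_{k+1}/τ_k² = γ_k/τ_{k−1}². -/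
open scoped RealInnerProductSpace BigOperators

lemma key_aux (t Lb DU bu bv d x y : ℝ)
    (ht2 : 2 ≤ t) (hLb : 1 ≤ Lb)
    (hx0 : 0 ≤ x) (hy0 : 0 ≤ y) (hd0 : 0 ≤ d)
    (hx2 : x^2 = 2*bv) (hy2 : Lb*y^2 = 2*bu)
    (hbuDU : bu ≤ DU) (hbu0 : 0 ≤ bu) (hDU0 : 0 ≤ DU)
    (hd : y - x ≤ d) :
    0 ≤ t*(bv - bu) + (t*(t-1)/2)*d^2 + ((Lb-1)*t+1)*DU := by
  have ht0 : (0:ℝ) < t := by linarith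
  have ht1 : (0:ℝ) < t - 1 := by linarith
  have hc0 : (0:ℝ) ≤ Lb - 1 := by linarith
  have hl0 : (0:ℝ) ≤ (Lb - 1) * t + 1 := by nlinarith
  rcases le_or_gt y x with hyx | hyx
  · nlinarith [mul_nonneg (mul_nonneg ht0.le (sub_nonneg.2 hbuDU)) hc0,
      mul_nonneg (mul_nonneg ht0.le (sub_nonneg.2 hyx)) (by linarith : (0:ℝ) ≤ x + y),
      mul_nonneg (mul_nonneg ht0.le (sq_nonneg (Lb-1))) (sq_nonneg y),
      mul_nonneg (mul_nonneg ht0.le ht1.le) (sq_nonneg d), hDU0]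
  · have hdsq : (y - x)^2 ≤ d^2 := by
      nlinarith [mul_nonneg (sub_nonneg.2 hd) (by linarith : (0:ℝ) ≤ d + (y - x))]
    nlinarith [sq_nonneg (t*x - (t-1)*y),
      mul_nonneg (mul_nonneg hc0 hl0) (sq_nonneg y),
      mul_nonneg hl0 (sub_nonneg.2 hbuDU),
      mul_nonneg (mul_nonneg ht0.le ht1.le) (sub_nonneg.2 hdsq),
      hDU0]

set_option maxHeartbeats 1000000 in
theorem stmt_12
    {n : ℕ} (hn : 1 ≤ n)
    (U : Set (EuclideanSpace ℝ (Fin n)))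
    (hUne : U.Nonempty) (hUcl : IsClosed U) (hUcx : Convex ℝ U)
    (φ : EuclideanSpace ℝ (Fin n) → EReal)
    (hφbot : ∀ v, φ v ≠ ⊥)
    (hφlsc : LowerSemicontinuous φ)
    (hφcx : ∀ v w : EuclideanSpace ℝ (Fin n), ∀ a c : ℝ, 0 ≤ a → 0 ≤ c → a + c = 1 →
      φ (a • v + c • w) ≤ (a : EReal) * φ v + (c : EReal) * φ w)
    (hφdom : ∃ v ∈ U, φ v ≠ ⊤)
    (b : EuclideanSpace ℝ (Fin n) → ℝ)
    (hbcont : Continuous b)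
    (hbsc : StrongConvexOn U 1 b)
    (ustar : ℝ → EuclideanSpace ℝ (Fin n) → EuclideanSpace ℝ (Fin n))
    (humem : ∀ γ > (0:ℝ), ∀ z, ustar γ z ∈ U)
    (hufin : ∀ γ > (0:ℝ), ∀ z, φ (ustar γ z) ≠ ⊤)
    (humax : ∀ γ > (0:ℝ), ∀ z, ∀ v ∈ U,
      (⟪z, v⟫ : EReal) - φ v - ((γ * b v : ℝ) : EReal)
        ≤ (⟪z, ustar γ z⟫ : EReal) - φ (ustar γ z) - ((γ * b (ustar γ z) : ℝ) : EReal))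
    (φs : ℝ → EuclideanSpace ℝ (Fin n) → ℝ)
    (hφs : ∀ γ z, φs γ z = ⟪z, ustar γ z⟫ - (φ (ustar γ z)).toReal - γ * b (ustar γ z))
    {p : ℕ} (hp : 1 ≤ p)
    (A : EuclideanSpace ℝ (Fin n) →L[ℝ] EuclideanSpace ℝ (Fin p))
    (b' : EuclideanSpace ℝ (Fin n) → EuclideanSpace ℝ (Fin n))
    (Lb : ℝ) (hLb : 1 ≤ Lb)
    (hbgrad : ∀ v, HasGradientAt b (b' v) v)
    (hbgradlip : LipschitzWith (Real.toNNReal Lb) b')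
    (uc : EuclideanSpace ℝ (Fin n)) (hucU : uc ∈ U) (hbuc : b uc = 0)
    (hucmin : ∀ v ∈ U, b uc ≤ b v)
    (hbsand : ∀ v ∈ U, (1/2) * ‖v - uc‖^2 ≤ b v ∧ b v ≤ (Lb/2) * ‖v - uc‖^2)
    (DU : ℝ)
    (hDUbdd : BddAbove (b '' {v | v ∈ U ∧ φ v ≠ ⊤}))
    (hDU : DU = sSup (b '' {v | v ∈ U ∧ φ v ≠ ⊤}))
    (cb γ1 : ℝ) (hcb : 1 ≤ cb) (hγ1 : 0 < γ1)
    (k : ℕ) (hk : 1 ≤ k)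
    (τk τkm1 γk γk1 : ℝ)
    (hτk : τk = 1/((k:ℝ) + cb)) (hτkm1 : τkm1 = 1/(((k:ℝ) - 1) + cb))
    (hγk1 : γk1 = γ1 * cb / ((k:ℝ) + cb)) (hγk : γk = γ1 * cb / (((k:ℝ) + cb) - 1))
    (xk xhk : EuclideanSpace ℝ (Fin p))
    (Rk : ℝ)
    (hRk : Rk = τk * γk1 * b (ustar γk1 ((ContinuousLinearMap.adjoint A) xhk))
        - (1 - τk) * (γk - γk1) * b (ustar γk1 ((ContinuousLinearMap.adjoint A) xk))
        + ((1 - τk) * γk1 / 2) * ‖ustar γk1 ((ContinuousLinearMap.adjoint A) xk) - ustar γk1 ((ContinuousLinearMap.adjoint A) xhk)‖^2)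
    :
    γk1 / τk^2 * Rk
        ≥ -(γ1^2 * cb^2 * ((Lb - 1) * ((k:ℝ) + cb) + 1) / ((k:ℝ) + cb)^2) * DU ∧
      (1 - τk) * γk1 / τk^2 = γk / τkm1^2 := by
  have hk1 : (1:ℝ) ≤ (k:ℝ) := by exact_mod_cast hk
  set t : ℝ := (k:ℝ) + cb with ht
  have ht2 : (2:ℝ) ≤ t := by rw [ht]; linarith
  have ht0 : (0:ℝ) < t := by linarith
  have ht1 : (0:ℝ) < t - 1 := by linarith
  have hLb0 : (0:ℝ) < Lb := by linarith
  have hγpos : 0 < γk1 := by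
    rw [hγk1]
    exact div_pos (mul_pos hγ1 (by linarith)) ht0
  set u := ustar γk1 ((ContinuousLinearMap.adjoint A) xk) with hu
  set v := ustar γk1 ((ContinuousLinearMap.adjoint A) xhk) with hv
  have huU : u ∈ U := humem γk1 hγpos _
  have hvU : v ∈ U := humem γk1 hγpos _
  have hbuDU : b u ≤ DU := by
    rw [hDU]; exact le_csSup hDUbdd ⟨u, ⟨huU, hufin γk1 hγpos _⟩, rfl⟩
  have hbu_low := (hbsand u huU).1
  have hbu_up := (hbsand u huU).2
  have hbv_low := (hbsand v hvU).1
  have hbu0 : 0 ≤ b u := le_trans (by positivity) hbu_low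
  have hbv0 : 0 ≤ b v := le_trans (by positivity) hbv_low
  have hDU0 : 0 ≤ DU := le_trans hbu0 hbuDU
  set d := ‖u - v‖ with hdd
  set x := Real.sqrt (2 * b v) with hxdef
  set y := Real.sqrt (2 * b u / Lb) with hydef
  have hx0 : 0 ≤ x := Real.sqrt_nonneg _
  have hy0 : 0 ≤ y := Real.sqrt_nonneg _
  have hx2 : x^2 = 2 * b v := Real.sq_sqrt (by linarith)
  have hy2 : Lb * y^2 = 2 * b u := by
    rw [hydef, Real.sq_sqrt (by positivity)]
    field_simp
  have he : ‖v - uc‖ ≤ x := by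
    rw [hxdef, show ‖v - uc‖ = Real.sqrt (‖v - uc‖^2) from (Real.sqrt_sq (norm_nonneg _)).symm]
    exact Real.sqrt_le_sqrt (by linarith)
  have hf : y ≤ ‖u - uc‖ := by
    rw [hydef, show ‖u - uc‖ = Real.sqrt (‖u - uc‖^2) from (Real.sqrt_sq (norm_nonneg _)).symm]
    apply Real.sqrt_le_sqrt
    rw [div_le_iff₀ hLb0]
    linarith [hbu_up]
  have htri : ‖u - uc‖ ≤ ‖u - v‖ + ‖v - uc‖ := by
    simpa [dist_eq_norm] using dist_triangle u v uc
  have hd : y - x ≤ d := by rw [hdd]; linarith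
  have hd0 : 0 ≤ d := norm_nonneg _
  have keyT : 0 ≤ t * (b v - b u) + (t*(t-1)/2) * d^2 + ((Lb-1)*t+1) * DU :=
    key_aux t Lb DU (b u) (b v) d x y ht2 hLb hx0 hy0 hd0 hx2 hy2 hbuDU hbu0 hDU0 hd
  have hne : t ≠ 0 := ne_of_gt ht0
  have hne1 : t - 1 ≠ 0 := ne_of_gt ht1
  constructor
  · have hEq : γk1 / τk^2 * Rk + γ1^2*cb^2*((Lb-1)*t+1)/t^2 * DU
        = γ1^2*cb^2/t^2 * (t * (b v - b u) + (t*(t-1)/2) * d^2 + ((Lb-1)*t+1) * DU) := by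
      rw [hRk, hτk, hγk1, hγk]
      field_simp
      ring
    have hpos : (0:ℝ) ≤ γ1^2*cb^2/t^2 * (t * (b v - b u) + (t*(t-1)/2) * d^2 + ((Lb-1)*t+1) * DU) :=
      mul_nonneg (by positivity) keyT
    linarith [hEq, hpos]
  · rw [hτk, hτkm1, hγk1, hγk]
    have h1 : ((k:ℝ) - 1) + cb = t - 1 := by rw [ht]; ring
    rw [h1]
    field_simp
end

section
/- Run the algorithm with c̄ = 1. Then for every k ≥ 1: F(x^k) − F* ≤ ‖A‖²·‖x⁰ − x*‖²/(2γ₁·k) + 3γ₁·D_U/k + γ₁·(L_b − 1)·(ln k + 1)·D_U/k. -/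
open scoped RealInnerProductSpace BigOperators

-- limit helper
private lemma aux_limit {a M s : ℝ} (hs : 0 ≤ s)
    (h : ∀ t : ℝ, 0 < t → t ≤ 1/2 → a + (1-t)*s ≤ M) : a + s ≤ M := by
  by_contra hcon
  push_neg at hcon
  set ε := a + s - M with hε
  have hε0 : 0 < ε := by simp [hε]; linarith
  set t := min (1/2) (ε/(2*(s+1))) with ht
  have ht0 : 0 < t := lt_min (by norm_num) (by positivity)
  have ht1 : t ≤ 1/2 := min_le_left _ _
  have h2 := h t ht0 ht1
  have hts : t*s ≤ ε/2 := by
    have h3 : t ≤ ε/(2*(s+1)) := min_le_right _ _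
    have h4 : t*s ≤ (ε/(2*(s+1)))*s := mul_le_mul_of_nonneg_right h3 hs
    have h5 : (ε/(2*(s+1)))*s ≤ ε/2 := by
      rw [div_mul_eq_mul_div, div_le_div_iff₀ (by positivity) (by norm_num)]
      nlinarith
    linarith
  nlinarith

-- norm of convex combination
private lemma aux_combo {m : ℕ} (a c : EuclideanSpace ℝ (Fin m)) (t : ℝ) :
    ‖(1-t) • a + t • c‖^2 = (1-t)*‖a‖^2 + t*‖c‖^2 - t*(1-t)*‖a - c‖^2 := by
  have h : ∀ v : EuclideanSpace ℝ (Fin m), ‖v‖^2 = ⟪v,v⟫ := fun v => by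
    rw [real_inner_self_eq_norm_sq]
  rw [h, h, h, h]
  simp only [inner_add_left, inner_add_right, inner_sub_left, inner_sub_right,
    real_inner_smul_left, real_inner_smul_right]
  rw [real_inner_comm c a]
  ring

private lemma aux_expand {m : ℕ} (v d : EuclideanSpace ℝ (Fin m)) (β : ℝ) :
    ‖v + β • d‖^2 = ‖v‖^2 + 2*β*⟪v,d⟫ + β^2*‖d‖^2 := by
  have h : ∀ w : EuclideanSpace ℝ (Fin m), ‖w‖^2 = ⟪w,w⟫ := fun w => by
    rw [real_inner_self_eq_norm_sq]
  rw [h, h, h]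
  simp only [inner_add_left, inner_add_right, real_inner_smul_left, real_inner_smul_right]
  rw [real_inner_comm d v]
  ring

-- strong maximality lemma
private lemma aux_strongmin {m : ℕ} {U : Set (EuclideanSpace ℝ (Fin m))}
    (hUcx : Convex ℝ U)
    {φ : EuclideanSpace ℝ (Fin m) → EReal}
    (hφbot : ∀ v, φ v ≠ ⊥)
    (hφcx : ∀ v w : EuclideanSpace ℝ (Fin m), ∀ a c : ℝ, 0 ≤ a → 0 ≤ c → a + c = 1 →
      φ (a • v + c • w) ≤ (a : EReal) * φ v + (c : EReal) * φ w)
    {b : EuclideanSpace ℝ (Fin m) → ℝ} (hbsc : StrongConvexOn U 1 b)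
    {γ : ℝ} (hγ : 0 < γ) {z v u : EuclideanSpace ℝ (Fin m)}
    (huU : u ∈ U) (hufin : φ u ≠ ⊤)
    (hvU : v ∈ U) (hvfin : φ v ≠ ⊤)
    (hmax : ∀ w ∈ U, (⟪z,w⟫ : EReal) - φ w - ((γ * b w : ℝ) : EReal)
      ≤ (⟪z,u⟫ : EReal) - φ u - ((γ * b u : ℝ) : EReal)) :
    ⟪z,v⟫ - (φ v).toReal - γ*(b v) + γ/2*‖v - u‖^2 ≤ ⟪z,u⟫ - (φ u).toReal - γ*(b u) := by
  have key : ∀ t : ℝ, 0 < t → t ≤ 1/2 →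
      (⟪z,v⟫ - (φ v).toReal - γ*(b v)) + (1-t)*(γ/2*‖v - u‖^2)
        ≤ ⟪z,u⟫ - (φ u).toReal - γ*(b u) := by
    intro t ht0 ht1
    have h1t0 : (0:ℝ) ≤ 1 - t := by linarith
    have hw : (1-t)•u + t•v ∈ U := hUcx huU hvU h1t0 ht0.le (by ring)
    have hφw_le : φ ((1-t)•u + t•v) ≤ (((1-t)*(φ u).toReal + t*(φ v).toReal : ℝ) : EReal) := by
      refine le_trans (hφcx u v (1-t) t h1t0 ht0.le (by ring)) (le_of_eq ?_)
      conv_lhs => rw [← EReal.coe_toReal hufin (hφbot u), ← EReal.coe_toReal hvfin (hφbot v)]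
      norm_cast
    have hmaxw := hmax _ hw
    have hRHS : (⟪z,u⟫ : EReal) - φ u - ((γ*(b u) : ℝ) : EReal)
        = ((⟪z,u⟫ - (φ u).toReal - γ*(b u) : ℝ) : EReal) := by
      conv_lhs => rw [← EReal.coe_toReal hufin (hφbot u)]
      norm_cast
    have hLHS : ((⟪z,(1-t)•u + t•v⟫ - ((1-t)*(φ u).toReal + t*(φ v).toReal)
          - γ*(b ((1-t)•u + t•v)) : ℝ) : EReal)
        ≤ (⟪z,(1-t)•u + t•v⟫ : EReal) - φ ((1-t)•u + t•v)
          - ((γ*(b ((1-t)•u + t•v)) : ℝ) : EReal) := by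
      have he : ((⟪z,(1-t)•u + t•v⟫ - ((1-t)*(φ u).toReal + t*(φ v).toReal)
          - γ*(b ((1-t)•u + t•v)) : ℝ) : EReal)
          = (⟪z,(1-t)•u + t•v⟫ : EReal)
            - (((1-t)*(φ u).toReal + t*(φ v).toReal : ℝ) : EReal)
            - ((γ*(b ((1-t)•u + t•v)) : ℝ) : EReal) := by norm_cast
      rw [he]
      exact EReal.sub_le_sub (EReal.sub_le_sub le_rfl hφw_le) le_rfl
    have hreal : ⟪z,(1-t)•u + t•v⟫ - ((1-t)*(φ u).toReal + t*(φ v).toReal)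
        - γ*(b ((1-t)•u + t•v)) ≤ ⟪z,u⟫ - (φ u).toReal - γ*(b u) := by
      have h6 := le_trans hLHS (le_trans hmaxw (le_of_eq hRHS))
      exact_mod_cast h6
    have hbw : b ((1-t)•u + t•v) ≤ (1-t)*(b u) + t*(b v) - (1-t)*t*(1/2*‖u - v‖^2) := by
      simpa using hbsc.2 huU hvU h1t0 ht0.le (by ring)
    have hinner : ⟪z,(1-t)•u + t•v⟫ = (1-t)*⟪z,u⟫ + t*⟪z,v⟫ := by
      rw [inner_add_right, real_inner_smul_right, real_inner_smul_right]
    have hnormeq : ‖u - v‖ = ‖v - u‖ := norm_sub_rev u v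
    have h7 : (1-t)*⟪z,u⟫ + t*⟪z,v⟫ - ((1-t)*(φ u).toReal + t*(φ v).toReal)
        - γ*((1-t)*(b u) + t*(b v) - (1-t)*t*(1/2*‖v - u‖^2))
        ≤ ⟪z,u⟫ - (φ u).toReal - γ*(b u) := by
      rw [hnormeq] at hbw
      nlinarith [hreal, hbw, hγ.le, hinner]
    have h8 : t*((⟪z,v⟫ - (φ v).toReal - γ*(b v)) + (1-t)*(γ/2*‖v - u‖^2))
        ≤ t*(⟪z,u⟫ - (φ u).toReal - γ*(b u)) := by nlinarith [h7]
    exact le_of_mul_le_mul_left h8 ht0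
  exact aux_limit (by positivity) key

-- three-point property of the prox point
private lemma aux_prox3 {m : ℕ} {g : EuclideanSpace ℝ (Fin m) → EReal}
    (hgbot : ∀ y, g y ≠ ⊥)
    (hgcx : ∀ y w : EuclideanSpace ℝ (Fin m), ∀ a c : ℝ, 0 ≤ a → 0 ≤ c → a + c = 1 →
      g (a • y + c • w) ≤ (a : EReal) * g y + (c : EReal) * g w)
    {β : ℝ} (hβ : 0 < β) {c P y : EuclideanSpace ℝ (Fin m)}
    (hPfin : g P ≠ ⊤) (hyfin : g y ≠ ⊤)
    (hmin : ∀ w, g P + (((2*β)⁻¹ * ‖P - c‖^2 : ℝ) : EReal)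
      ≤ g w + (((2*β)⁻¹ * ‖w - c‖^2 : ℝ) : EReal)) :
    (g P).toReal + (2*β)⁻¹*‖P - c‖^2 + (2*β)⁻¹*‖y - P‖^2
      ≤ (g y).toReal + (2*β)⁻¹*‖y - c‖^2 := by
  have key : ∀ t : ℝ, 0 < t → t ≤ 1/2 →
      ((g P).toReal + (2*β)⁻¹*‖P - c‖^2) + (1-t)*((2*β)⁻¹*‖y - P‖^2)
        ≤ (g y).toReal + (2*β)⁻¹*‖y - c‖^2 := by
    intro t ht0 ht1
    have h1t0 : (0:ℝ) ≤ 1 - t := by linarith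
    have hgw_le : g ((1-t)•P + t•y) ≤ (((1-t)*(g P).toReal + t*(g y).toReal : ℝ) : EReal) := by
      refine le_trans (hgcx P y (1-t) t h1t0 ht0.le (by ring)) (le_of_eq ?_)
      conv_lhs => rw [← EReal.coe_toReal hPfin (hgbot P), ← EReal.coe_toReal hyfin (hgbot y)]
      norm_cast
    have hminw := hmin ((1-t)•P + t•y)
    have hLHSc : g P + (((2*β)⁻¹ * ‖P - c‖^2 : ℝ) : EReal)
        = (((g P).toReal + (2*β)⁻¹ * ‖P - c‖^2 : ℝ) : EReal) := by
      conv_lhs => rw [← EReal.coe_toReal hPfin (hgbot P)]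
      norm_cast
    have hRHSc : g ((1-t)•P + t•y) + (((2*β)⁻¹ * ‖(1-t)•P + t•y - c‖^2 : ℝ) : EReal)
        ≤ (((1-t)*(g P).toReal + t*(g y).toReal
            + (2*β)⁻¹ * ‖(1-t)•P + t•y - c‖^2 : ℝ) : EReal) := by
      have he : (((1-t)*(g P).toReal + t*(g y).toReal
            + (2*β)⁻¹ * ‖(1-t)•P + t•y - c‖^2 : ℝ) : EReal)
          = (((1-t)*(g P).toReal + t*(g y).toReal : ℝ) : EReal)
            + (((2*β)⁻¹ * ‖(1-t)•P + t•y - c‖^2 : ℝ) : EReal) := by norm_cast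
      rw [he]
      exact add_le_add hgw_le le_rfl
    have hreal : (g P).toReal + (2*β)⁻¹ * ‖P - c‖^2
        ≤ (1-t)*(g P).toReal + t*(g y).toReal + (2*β)⁻¹ * ‖(1-t)•P + t•y - c‖^2 := by
      have h6 := le_trans (le_of_eq hLHSc.symm) (le_trans hminw hRHSc)
      exact_mod_cast h6
    have hcombo : ‖(1-t)•P + t•y - c‖^2
        = (1-t)*‖P - c‖^2 + t*‖y - c‖^2 - t*(1-t)*‖P - y‖^2 := by
      have hv : (1-t)•P + t•y - c = (1-t)•(P - c) + t•(y - c) := by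
        module
      rw [hv, aux_combo]
      congr 3
      abel
    have hnormeq : ‖P - y‖ = ‖y - P‖ := norm_sub_rev P y
    rw [hcombo, hnormeq] at hreal
    have h8 : t*(((g P).toReal + (2*β)⁻¹*‖P - c‖^2) + (1-t)*((2*β)⁻¹*‖y - P‖^2))
        ≤ t*((g y).toReal + (2*β)⁻¹*‖y - c‖^2) := by nlinarith [hreal]
    exact le_of_mul_le_mul_left h8 ht0
  exact aux_limit (by positivity) key

set_option maxHeartbeats 1000000 in
theorem stmt_15
    {n : ℕ} (hn : 1 ≤ n)
    (U : Set (EuclideanSpace ℝ (Fin n)))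
    (hUne : U.Nonempty) (hUcl : IsClosed U) (hUcx : Convex ℝ U)
    (φ : EuclideanSpace ℝ (Fin n) → EReal)
    (hφbot : ∀ v, φ v ≠ ⊥)
    (hφlsc : LowerSemicontinuous φ)
    (hφcx : ∀ v w : EuclideanSpace ℝ (Fin n), ∀ a c : ℝ, 0 ≤ a → 0 ≤ c → a + c = 1 →
      φ (a • v + c • w) ≤ (a : EReal) * φ v + (c : EReal) * φ w)
    (hφdom : ∃ v ∈ U, φ v ≠ ⊤)
    (b : EuclideanSpace ℝ (Fin n) → ℝ)
    (hbcont : Continuous b)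
    (hbsc : StrongConvexOn U 1 b)
    (ustar : ℝ → EuclideanSpace ℝ (Fin n) → EuclideanSpace ℝ (Fin n))
    (humem : ∀ γ > (0:ℝ), ∀ z, ustar γ z ∈ U)
    (hufin : ∀ γ > (0:ℝ), ∀ z, φ (ustar γ z) ≠ ⊤)
    (humax : ∀ γ > (0:ℝ), ∀ z, ∀ v ∈ U,
      (⟪z, v⟫ : EReal) - φ v - ((γ * b v : ℝ) : EReal)
        ≤ (⟪z, ustar γ z⟫ : EReal) - φ (ustar γ z) - ((γ * b (ustar γ z) : ℝ) : EReal))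
    (φs : ℝ → EuclideanSpace ℝ (Fin n) → ℝ)
    (hφs : ∀ γ z, φs γ z = ⟪z, ustar γ z⟫ - (φ (ustar γ z)).toReal - γ * b (ustar γ z))
    {p : ℕ} (hp : 1 ≤ p)
    (A : EuclideanSpace ℝ (Fin n) →L[ℝ] EuclideanSpace ℝ (Fin p))
    (hAnorm : 0 < ‖A‖)
    (b' : EuclideanSpace ℝ (Fin n) → EuclideanSpace ℝ (Fin n))
    (Lb : ℝ) (hLb : 1 ≤ Lb)
    (hbgrad : ∀ v, HasGradientAt b (b' v) v)
    (hbgradlip : LipschitzWith (Real.toNNReal Lb) b')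
    (uc : EuclideanSpace ℝ (Fin n)) (hucU : uc ∈ U) (hbuc : b uc = 0)
    (hucmin : ∀ v ∈ U, b uc ≤ b v)
    (hbsand : ∀ v ∈ U, (1/2) * ‖v - uc‖^2 ≤ b v ∧ b v ≤ (Lb/2) * ‖v - uc‖^2)
    (DU : ℝ)
    (hDUbdd : BddAbove (b '' {v | v ∈ U ∧ φ v ≠ ⊤}))
    (hDU : DU = sSup (b '' {v | v ∈ U ∧ φ v ≠ ⊤}))
    (f : EuclideanSpace ℝ (Fin p) → EReal)
    (hf : ∀ x, f x = ⨆ v ∈ U, ((⟪x, A v⟫ : EReal) - φ v))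
    (g : EuclideanSpace ℝ (Fin p) → EReal)
    (hgbot : ∀ y, g y ≠ ⊥)
    (hgdom : ∃ y, g y ≠ ⊤)
    (hglsc : LowerSemicontinuous g)
    (hgcx : ∀ y w : EuclideanSpace ℝ (Fin p), ∀ a c : ℝ, 0 ≤ a → 0 ≤ c → a + c = 1 →
      g (a • y + c • w) ≤ (a : EReal) * g y + (c : EReal) * g w)
    (prox : ℝ → EuclideanSpace ℝ (Fin p) → EuclideanSpace ℝ (Fin p))
    (hprox : ∀ β > (0:ℝ), ∀ x y,
      g (prox β x) + (((2*β)⁻¹ * ‖prox β x - x‖^2 : ℝ) : EReal)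
        ≤ g y + (((2*β)⁻¹ * ‖y - x‖^2 : ℝ) : EReal))
    (hproxu : ∀ β > (0:ℝ), ∀ x y,
      (∀ w, g y + (((2*β)⁻¹ * ‖y - x‖^2 : ℝ) : EReal)
          ≤ g w + (((2*β)⁻¹ * ‖w - x‖^2 : ℝ) : EReal)) → y = prox β x)
    (γ1 : ℝ) (hγ1 : 0 < γ1)
    (τ : ℕ → ℝ) (hτ : ∀ k : ℕ, τ k = 1/((k:ℝ) + 1))
    (γs : ℕ → ℝ) (hγs : ∀ k : ℕ, γs (k+1) = γ1 / ((k:ℝ) + 1))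
    (x xt xh : ℕ → EuclideanSpace ℝ (Fin p))
    (hxt0 : xt 0 = x 0) (hx0dom : f (x 0) + g (x 0) ≠ ⊤)
    (hxh : ∀ k : ℕ, xh k = (1 - τ k) • x k + τ k • xt k)
    (hxrec : ∀ k : ℕ, x (k+1)
        = prox (γs (k+1)/‖A‖^2) (xh k - (γs (k+1)/‖A‖^2) • A (ustar (γs (k+1)) ((ContinuousLinearMap.adjoint A) (xh k)))))
    (hxtrec : ∀ k : ℕ, xt (k+1) = xt k - (τ k)⁻¹ • (xh k - x (k+1)))
    (xs : EuclideanSpace ℝ (Fin p)) (Fs : ℝ)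
    (hFs : f xs + g xs = (Fs : EReal)) (hFmin : ∀ y, (Fs : EReal) ≤ f y + g y)
    :
    ∀ k : ℕ, 1 ≤ k →
      (f (x k) + g (x k)) - (Fs : EReal)
        ≤ ((‖A‖^2 * ‖x 0 - xs‖^2 / (2*γ1*(k:ℝ)) + 3*γ1*DU/(k:ℝ)
            + γ1*(Lb - 1)*(Real.log (k:ℝ) + 1)*DU/(k:ℝ) : ℝ) : EReal) := by
  classical
  obtain ⟨Bop, hBd⟩ : ∃ Bop, Bop = ContinuousLinearMap.adjoint A := ⟨_, rfl⟩
  obtain ⟨v0, hv0U, hv0t⟩ := hφdom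
  have hadj : ∀ (w : EuclideanSpace ℝ (Fin p)) (u : EuclideanSpace ℝ (Fin n)),
      ⟪Bop w, u⟫ = ⟪w, A u⟫ := by
    intro w u
    rw [hBd]
    exact ContinuousLinearMap.adjoint_inner_left A u w
  have hBnorm : ∀ w : EuclideanSpace ℝ (Fin p), ‖Bop w‖ ≤ ‖A‖ * ‖w‖ := by
    intro w
    calc ‖Bop w‖ ≤ ‖Bop‖ * ‖w‖ := Bop.le_opNorm w
      _ = ‖A‖ * ‖w‖ := by rw [hBd, LinearIsometryEquiv.norm_map]
  have hbnn : ∀ v ∈ U, 0 ≤ b v := fun v hv =>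
    le_trans (by positivity) (hbsand v hv).1
  have hbDU : ∀ v, v ∈ U → φ v ≠ ⊤ → b v ≤ DU := by
    intro v hv hvt
    rw [hDU]
    exact le_csSup hDUbdd ⟨v, ⟨hv, hvt⟩, rfl⟩
  have hDU0 : 0 ≤ DU := le_trans (hbnn v0 hv0U) (hbDU v0 hv0U hv0t)
  -- strong / weak real versions of humax
  have humaxS : ∀ γ : ℝ, 0 < γ → ∀ z v, v ∈ U → φ v ≠ ⊤ →
      ⟪z,v⟫ - (φ v).toReal - γ*(b v) + γ/2*‖v - ustar γ z‖^2 ≤ φs γ z := by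
    intro γ hγ z v hv hvt
    rw [hφs]
    exact aux_strongmin hUcx hφbot hφcx hbsc hγ (humem γ hγ z) (hufin γ hγ z) hv hvt
      (fun w hw => humax γ hγ z w hw)
  have humaxR : ∀ γ : ℝ, 0 < γ → ∀ z v, v ∈ U → φ v ≠ ⊤ →
      ⟪z,v⟫ - (φ v).toReal - γ*(b v) ≤ φs γ z := by
    intro γ hγ z v hv hvt
    have h1 := humaxS γ hγ z v hv hvt
    have h2 : 0 ≤ γ/2*‖v - ustar γ z‖^2 :=
      mul_nonneg (by linarith) (sq_nonneg _)
    linarith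
  -- g at prox points is finite
  have gprox_fin : ∀ β : ℝ, 0 < β → ∀ c, g (prox β c) ≠ ⊤ := by
    intro β hβ c htop
    obtain ⟨y0, hy0⟩ := hgdom
    have h := hprox β hβ c y0
    rw [htop, EReal.top_add_of_ne_bot (EReal.coe_ne_bot _)] at h
    have h3 : g y0 + (((2*β)⁻¹ * ‖y0 - c‖^2 : ℝ) : EReal)
        ≤ (((g y0).toReal + (2*β)⁻¹ * ‖y0 - c‖^2 : ℝ) : EReal) := by
      conv_lhs => rw [← EReal.coe_toReal hy0 (hgbot y0)]
      norm_cast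
    exact (EReal.coe_lt_top _).not_ge (le_trans h h3)
  -- facts about xs
  have flb : ∀ xx, ((⟪xx, A v0⟫ - (φ v0).toReal : ℝ) : EReal) ≤ f xx := by
    intro xx
    rw [hf xx]
    have he : ((⟪xx, A v0⟫ - (φ v0).toReal : ℝ) : EReal) = (⟪xx, A v0⟫ : EReal) - φ v0 := by
      conv_rhs => rw [← EReal.coe_toReal hv0t (hφbot v0)]
      norm_cast
    rw [he]
    exact le_iSup₂ (f := fun v (_ : v ∈ U) => (⟪xx, A v⟫ : EReal) - φ v) v0 hv0U
  have hfne_bot : ∀ xx, f xx ≠ ⊥ := by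
    intro xx h
    exact (EReal.bot_lt_coe _).not_ge (h ▸ flb xx)
  have hfxs_b : f xs ≠ ⊥ := hfne_bot xs
  have hgxs_t : g xs ≠ ⊤ := by
    intro h
    have h2 := hFs
    rw [h, EReal.add_top_of_ne_bot hfxs_b] at h2
    exact (EReal.coe_ne_top Fs) h2.symm
  have hfxs_t : f xs ≠ ⊤ := by
    intro h
    have h2 := hFs
    rw [h, EReal.top_add_of_ne_bot (hgbot xs)] at h2
    exact (EReal.coe_ne_top Fs) h2.symm
  have hsum : (f xs).toReal + (g xs).toReal = Fs := by
    have h2 := hFs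
    rw [← EReal.coe_toReal hfxs_t hfxs_b, ← EReal.coe_toReal hgxs_t (hgbot xs)] at h2
    exact_mod_cast h2
  have hfxs_ub : ∀ u, u ∈ U → φ u ≠ ⊤ → ⟪Bop xs, u⟫ - (φ u).toReal ≤ (f xs).toReal := by
    intro u hu hut
    have h1 : ((⟪Bop xs, u⟫ - (φ u).toReal : ℝ) : EReal) ≤ f xs := by
      rw [hf xs]
      have he : ((⟪Bop xs, u⟫ - (φ u).toReal : ℝ) : EReal) = (⟪xs, A u⟫ : EReal) - φ u := by
        rw [hadj]
        conv_rhs => rw [← EReal.coe_toReal hut (hφbot u)]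
        norm_cast
      rw [he]
      exact le_iSup₂ (f := fun v (_ : v ∈ U) => (⟪xs, A v⟫ : EReal) - φ v) u hu
    have h2 := EReal.toReal_le_toReal h1 (EReal.coe_ne_bot _) hfxs_t
    rwa [EReal.toReal_coe] at h2
  -- upper bound f via the smoothed function
  have fub : ∀ γ : ℝ, 0 < γ → ∀ xx, f xx ≤ ((φs γ (Bop xx) + γ*DU : ℝ) : EReal) := by
    intro γ hγ xx
    rw [hf xx]
    refine iSup₂_le fun v hv => ?_
    by_cases hvt : φ v = ⊤
    · rw [hvt, EReal.sub_top]
      exact bot_le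
    · have hr := humaxR γ hγ (Bop xx) v hv hvt
      have hb' := hbDU v hv hvt
      have hreal : ⟪xx, A v⟫ - (φ v).toReal ≤ φs γ (Bop xx) + γ*DU := by
        rw [← hadj xx v]
        linarith [hr, mul_le_mul_of_nonneg_left hb' hγ.le]
      have he : (⟪xx, A v⟫ : EReal) - φ v = ((⟪xx, A v⟫ - (φ v).toReal : ℝ) : EReal) := by
        conv_lhs => rw [← EReal.coe_toReal hvt (hφbot v)]
        norm_cast
      rw [he]
      exact_mod_cast hreal
  have hgx0 : g (x 0) ≠ ⊤ := by
    intro h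
    exact hx0dom (by rw [h]; exact EReal.add_top_of_ne_bot (hfne_bot _))
  -- the one-step estimate
  have step : ∀ k : ℕ, g (x k) ≠ ⊤ →
      ((k:ℝ)+1) * (φs (γs (k+1)) (Bop (x (k+1))) + (g (x (k+1))).toReal - Fs)
          + (‖A‖^2/(2*γ1)) * ‖xs - xt (k+1)‖^2
        ≤ (k:ℝ) * (φs (γs k) (Bop (x k)) + (g (x k)).toReal - Fs)
          + (‖A‖^2/(2*γ1)) * ‖xs - xt k‖^2 := by
    intro k hgxk
    obtain ⟨τr, hτrd⟩ : ∃ t : ℝ, t = 1/((k:ℝ)+1) := ⟨_, rfl⟩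
    obtain ⟨γ, hγd⟩ : ∃ t : ℝ, t = γs (k+1) := ⟨_, rfl⟩
    obtain ⟨β, hβd⟩ : ∃ t : ℝ, t = γ/‖A‖^2 := ⟨_, rfl⟩
    obtain ⟨u1, hu1d⟩ : ∃ w, w = ustar γ (Bop (xh k)) := ⟨_, rfl⟩
    obtain ⟨y, hyd⟩ : ∃ w, w = (1-τr) • x k + τr • xs := ⟨_, rfl⟩
    have hk1 : (0:ℝ) < (k:ℝ)+1 := by positivity
    have hτr0 : 0 < τr := by rw [hτrd]; positivity
    have hτr1 : τr ≤ 1 := by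
      rw [hτrd, div_le_one hk1]
      have : (0:ℝ) ≤ (k:ℝ) := Nat.cast_nonneg k
      linarith
    have hτrne : τr ≠ 0 := ne_of_gt hτr0
    have hγval : γ = γ1/((k:ℝ)+1) := by rw [hγd, hγs k]
    have hγpos : 0 < γ := by rw [hγval]; positivity
    have hA2 : (0:ℝ) < ‖A‖^2 := pow_pos hAnorm 2
    have hβpos : 0 < β := by rw [hβd]; exact div_pos hγpos hA2
    have hβinv : (2*β)⁻¹ = ‖A‖^2/(2*γ) := by
      rw [hβd, show 2*(γ/‖A‖^2) = 2*γ/‖A‖^2 from by ring, inv_div]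
    have hx1 : x (k+1) = prox β (xh k - β • A u1) := by
      rw [hu1d, hβd, hγd, hBd, hxrec k]
    have hu1U : u1 ∈ U := by rw [hu1d]; exact humem γ hγpos _
    have hu1fin : φ u1 ≠ ⊤ := by rw [hu1d]; exact hufin γ hγpos _
    have hbu1 : 0 ≤ b u1 := hbnn u1 hu1U
    have hφsX : φs γ (Bop (xh k)) = ⟪Bop (xh k), u1⟫ - (φ u1).toReal - γ*(b u1) := by
      rw [hφs, ← hu1d]
    -- descent inequality
    have hdesc : φs γ (Bop (x (k+1))) ≤ φs γ (Bop (xh k)) + ⟪x (k+1) - xh k, A u1⟫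
        + (2*β)⁻¹ * ‖x (k+1) - xh k‖^2 := by
      have hu2U : ustar γ (Bop (x (k+1))) ∈ U := humem γ hγpos _
      have hu2fin : φ (ustar γ (Bop (x (k+1)))) ≠ ⊤ := hufin γ hγpos _
      have e1 : φs γ (Bop (x (k+1))) = ⟪Bop (x (k+1)), ustar γ (Bop (x (k+1)))⟫
          - (φ (ustar γ (Bop (x (k+1))))).toReal - γ*(b (ustar γ (Bop (x (k+1))))) := hφs _ _
      have hstrong := humaxS γ hγpos (Bop (xh k)) (ustar γ (Bop (x (k+1)))) hu2U hu2fin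
      rw [← hu1d] at hstrong
      have e2 : ⟪Bop (x (k+1)), ustar γ (Bop (x (k+1)))⟫
          = ⟪Bop (xh k), ustar γ (Bop (x (k+1)))⟫
            + ⟪Bop (x (k+1) - xh k), ustar γ (Bop (x (k+1)))⟫ := by
        rw [← inner_add_left, ← map_add]
        congr 2
        abel
      have e3 : ⟪Bop (x (k+1) - xh k), ustar γ (Bop (x (k+1)))⟫
          = ⟪x (k+1) - xh k, A u1⟫ + ⟪Bop (x (k+1) - xh k), ustar γ (Bop (x (k+1))) - u1⟫ := by
        rw [inner_sub_right, hadj (x (k+1) - xh k) u1]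
        ring
      have e4 : ⟪Bop (x (k+1) - xh k), ustar γ (Bop (x (k+1))) - u1⟫
          ≤ ‖A‖ * ‖x (k+1) - xh k‖ * ‖ustar γ (Bop (x (k+1))) - u1‖ := by
        refine le_trans (real_inner_le_norm _ _) ?_
        have h5 := hBnorm (x (k+1) - xh k)
        have h6 : (0:ℝ) ≤ ‖ustar γ (Bop (x (k+1))) - u1‖ := norm_nonneg _
        nlinarith [norm_nonneg (Bop (x (k+1) - xh k))]
      have e4' : ‖x (k+1) - xh k‖ = ‖(x (k+1)) - xh k‖ := rfl
      have hnorme : Bop (x (k+1) - xh k) = Bop (x (k+1)) - Bop (xh k) := map_sub _ _ _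
      have young : ‖A‖ * ‖x (k+1) - xh k‖ * ‖ustar γ (Bop (x (k+1))) - u1‖
          ≤ (2*β)⁻¹ * ‖x (k+1) - xh k‖^2 + γ/2 * ‖ustar γ (Bop (x (k+1))) - u1‖^2 := by
        rw [hβinv]
        have h2γ : (0:ℝ) < 2*γ := by linarith
        have heq : ‖A‖^2/(2*γ)*‖x (k+1) - xh k‖^2 + γ/2*‖ustar γ (Bop (x (k+1))) - u1‖^2
            - ‖A‖ * ‖x (k+1) - xh k‖ * ‖ustar γ (Bop (x (k+1))) - u1‖
            = (‖A‖ * ‖x (k+1) - xh k‖ - γ * ‖ustar γ (Bop (x (k+1))) - u1‖)^2/(2*γ) := by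
          field_simp
          ring
        have hpos := div_nonneg
          (sq_nonneg (‖A‖ * ‖x (k+1) - xh k‖ - γ * ‖ustar γ (Bop (x (k+1))) - u1‖)) h2γ.le
        linarith
      linarith [hstrong, e4, young, e1.le, e1.ge, e2.le, e2.ge, e3.le, e3.ge]
    -- prox three point
    have hgP : g (x (k+1)) ≠ ⊤ := by
      rw [hx1]; exact gprox_fin β hβpos _
    have hgy_le : g y ≤ (((1-τr)*(g (x k)).toReal + τr*(g xs).toReal : ℝ) : EReal) := by
      rw [hyd]
      refine le_trans (hgcx (x k) xs (1-τr) τr (by linarith) hτr0.le (by ring)) (le_of_eq ?_)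
      conv_lhs => rw [← EReal.coe_toReal hgxk (hgbot _), ← EReal.coe_toReal hgxs_t (hgbot _)]
      norm_cast
    have hgy_t : g y ≠ ⊤ := by
      intro h
      rw [h] at hgy_le
      exact (EReal.coe_lt_top _).not_ge hgy_le
    have hGy : (g y).toReal ≤ (1-τr)*(g (x k)).toReal + τr*(g xs).toReal := by
      have h2 := EReal.toReal_le_toReal hgy_le (hgbot y) (EReal.coe_ne_top _)
      rwa [EReal.toReal_coe] at h2
    have h3pt : (g (x (k+1))).toReal + (2*β)⁻¹*‖x (k+1) - (xh k - β • A u1)‖^2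
        + (2*β)⁻¹*‖y - x (k+1)‖^2
        ≤ (g y).toReal + (2*β)⁻¹*‖y - (xh k - β • A u1)‖^2 := by
      have hmin : ∀ w, g (x (k+1)) + (((2*β)⁻¹ * ‖x (k+1) - (xh k - β • A u1)‖^2 : ℝ) : EReal)
          ≤ g w + (((2*β)⁻¹ * ‖w - (xh k - β • A u1)‖^2 : ℝ) : EReal) := by
        intro w
        have hh := hprox β hβpos (xh k - β • A u1) w
        rw [← hx1] at hh
        exact hh
      exact aux_prox3 hgbot hgcx hβpos hgP hgy_t hmin
    have hexp : ∀ w : EuclideanSpace ℝ (Fin p), ‖w - (xh k - β • A u1)‖^2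
        = ‖w - xh k‖^2 + 2*β*⟪w - xh k, A u1⟫ + β^2*‖A u1‖^2 := by
      intro w
      rw [show w - (xh k - β • A u1) = (w - xh k) + β • A u1 from by abel, aux_expand]
    rw [hexp (x (k+1)), hexp y] at h3pt
    have hsimp : ∀ s q : ℝ, (2*β)⁻¹*(s + 2*β*q + β^2*‖A u1‖^2)
        = (2*β)⁻¹*s + q + β/2*‖A u1‖^2 := by
      intro s q
      field_simp
    rw [hsimp, hsimp] at h3pt
    -- geometry of the interpolation points
    have hysplit : y - xh k = τr • (xs - xt k) := by
      rw [hyd, hxh k, hτ k, ← hτrd]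
      module
    have hyPsplit : y - x (k+1) = τr • (xs - xt (k+1)) := by
      have h1 : τr • xt (k+1) = τr • xt k - (xh k - x (k+1)) := by
        rw [hxtrec k, hτ k, ← hτrd, smul_sub, smul_smul, mul_inv_cancel₀ hτrne, one_smul]
      rw [smul_sub, h1, hyd, hxh k, hτ k, ← hτrd]
      module
    have hyn : ‖y - xh k‖^2 = τr^2 * ‖xs - xt k‖^2 := by
      rw [hysplit, norm_smul, mul_pow]
      rw [Real.norm_eq_abs, abs_of_pos hτr0]
    have hyPn : ‖y - x (k+1)‖^2 = τr^2 * ‖xs - xt (k+1)‖^2 := by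
      rw [hyPsplit, norm_smul, mul_pow]
      rw [Real.norm_eq_abs, abs_of_pos hτr0]
    rw [hyn, hyPn] at h3pt
    have hCτ' : ∀ W : ℝ, (2*β)⁻¹*(τr^2*W) = ‖A‖^2/(2*γ1)*τr*W := by
      intro W
      rw [hβinv, hγval, hτrd]
      field_simp
    rw [hCτ' (‖xs - xt k‖^2), hCτ' (‖xs - xt (k+1)‖^2)] at h3pt
    have hidsplit : y - xh k = (1-τr) • (x k - xh k) + τr • (xs - xh k) := by
      rw [hyd]
      module
    have hinner_split : ⟪y - xh k, A u1⟫
        = (1-τr)*⟪x k - xh k, A u1⟫ + τr*⟪xs - xh k, A u1⟫ := by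
      rw [hidsplit, inner_add_left, real_inner_smul_left, real_inner_smul_left]
    have hA1 : φs γ (Bop (xh k)) + ⟪x k - xh k, A u1⟫
        = ⟪Bop (x k), u1⟫ - (φ u1).toReal - γ*(b u1) := by
      rw [hφsX]
      have h5 : ⟪x k - xh k, A u1⟫ = ⟪Bop (x k), u1⟫ - ⟪Bop (xh k), u1⟫ := by
        rw [inner_sub_left, ← hadj, ← hadj]
      rw [h5]
      ring
    have hA2t : φs γ (Bop (xh k)) + ⟪xs - xh k, A u1⟫
        = ⟪Bop xs, u1⟫ - (φ u1).toReal - γ*(b u1) := by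
      rw [hφsX]
      have h5 : ⟪xs - xh k, A u1⟫ = ⟪Bop xs, u1⟫ - ⟪Bop (xh k), u1⟫ := by
        rw [inner_sub_left, ← hadj, ← hadj]
      rw [h5]
      ring
    have hA1bd : (1-τr)*(φs γ (Bop (xh k)) + ⟪x k - xh k, A u1⟫)
        ≤ (1-τr)*(φs (γs k) (Bop (x k))) + ((1-τr)*(γs k - γ))*(b u1) := by
      rcases Nat.eq_zero_or_pos k with hk0 | hkpos
      · subst hk0
        have h0 : 1 - τr = 0 := by rw [hτrd]; norm_num
        rw [h0]
        simp
      · obtain ⟨m, rfl⟩ : ∃ m, k = m+1 := ⟨k-1, (Nat.succ_pred_eq_of_pos hkpos).symm⟩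
        have hγk : γs (m+1) = γ1/((m:ℝ)+1) := hγs m
        have hγkpos : 0 < γs (m+1) := by rw [hγk]; positivity
        have hm := humaxR (γs (m+1)) hγkpos (Bop (x (m+1))) u1 hu1U hu1fin
        rw [hA1]
        have h1τ : 0 ≤ 1 - τr := by linarith
        linarith [mul_le_mul_of_nonneg_left hm h1τ]
    have hA2bd : φs γ (Bop (xh k)) + ⟪xs - xh k, A u1⟫ ≤ (f xs).toReal - γ*(b u1) := by
      rw [hA2t]
      have h5 := hfxs_ub u1 hu1U hu1fin
      linarith
    have hcoef : ((1-τr)*(γs k - γ))*(b u1) - τr*(γ*(b u1)) ≤ 0 := by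
      rcases Nat.eq_zero_or_pos k with hk0 | hkpos
      · subst hk0
        have h0 : 1 - τr = 0 := by rw [hτrd]; norm_num
        have h1 : τr = 1 := by rw [hτrd]; norm_num
        rw [h0, h1]
        simp
        positivity
      · obtain ⟨m, rfl⟩ : ∃ m, k = m+1 := ⟨k-1, (Nat.succ_pred_eq_of_pos hkpos).symm⟩
        have hγk : γs (m+1) = γ1/((m:ℝ)+1) := hγs m
        have hmm : (0:ℝ) < (m:ℝ)+1 := by positivity
        have hmm2 : (0:ℝ) < ((m:ℕ):ℝ)+1+1 := by positivity
        have heq : (1-τr)*(γs (m+1) - γ) = τr*γ := by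
          rw [hτrd, hγval, hγk]
          push_cast
          field_simp
          ring
        rw [heq]
        have : (τr*γ)*(b u1) - τr*(γ*(b u1)) = 0 := by ring
        linarith
    -- assemble the τ-form inequality
    have hsum' : τr*((f xs).toReal + (g xs).toReal) = τr*Fs := by rw [hsum]
    have hm2 : φs γ (Bop (xh k)) + ⟪y - xh k, A u1⟫
        ≤ (1-τr)*(φs (γs k) (Bop (x k))) + ((1-τr)*(γs k - γ))*(b u1)
          + τr*((f xs).toReal - γ*(b u1)) := by
      have e : φs γ (Bop (xh k)) + ⟪y - xh k, A u1⟫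
          = (1-τr)*(φs γ (Bop (xh k)) + ⟪x k - xh k, A u1⟫)
            + τr*(φs γ (Bop (xh k)) + ⟪xs - xh k, A u1⟫) := by
        rw [hinner_split]
        ring
      rw [e]
      have h2 := mul_le_mul_of_nonneg_left hA2bd hτr0.le
      linarith [hA1bd]
    have hτform : φs γ (Bop (x (k+1))) + (g (x (k+1))).toReal - Fs
        + ‖A‖^2/(2*γ1)*τr*‖xs - xt (k+1)‖^2
        ≤ (1-τr)*(φs (γs k) (Bop (x k)) + (g (x k)).toReal - Fs)
        + ‖A‖^2/(2*γ1)*τr*‖xs - xt k‖^2 := by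
      linarith [hdesc, h3pt, hm2, hGy, hcoef, hsum']
    -- multiply by k+1
    have hmul := mul_le_mul_of_nonneg_left hτform hk1.le
    have e3 : ((k:ℝ)+1)*(φs γ (Bop (x (k+1))) + (g (x (k+1))).toReal - Fs
        + ‖A‖^2/(2*γ1)*τr*‖xs - xt (k+1)‖^2)
        = ((k:ℝ)+1)*(φs γ (Bop (x (k+1))) + (g (x (k+1))).toReal - Fs)
          + (‖A‖^2/(2*γ1))*‖xs - xt (k+1)‖^2 := by
      rw [hτrd]
      field_simp
    have e4 : ((k:ℝ)+1)*((1-τr)*(φs (γs k) (Bop (x k)) + (g (x k)).toReal - Fs)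
        + ‖A‖^2/(2*γ1)*τr*‖xs - xt k‖^2)
        = (k:ℝ)*(φs (γs k) (Bop (x k)) + (g (x k)).toReal - Fs)
          + (‖A‖^2/(2*γ1))*‖xs - xt k‖^2 := by
      rw [hτrd]
      field_simp
      ring
    rw [e3, e4] at hmul
    rw [hγd] at hmul
    exact hmul
  -- induction
  have main : ∀ K : ℕ, g (x K) ≠ ⊤ ∧
      (K:ℝ) * (φs (γs K) (Bop (x K)) + (g (x K)).toReal - Fs)
        + (‖A‖^2/(2*γ1)) * ‖xs - xt K‖^2 ≤ (‖A‖^2/(2*γ1)) * ‖xs - xt 0‖^2 := by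
    intro K
    induction K with
    | zero =>
      refine ⟨hgx0, ?_⟩
      norm_num
    | succ k ih =>
      obtain ⟨ihg, ihle⟩ := ih
      have hst := step k ihg
      have hgk1 : g (x (k+1)) ≠ ⊤ := by
        rw [hxrec k]
        refine gprox_fin _ ?_ _
        rw [hγs k]
        exact div_pos (by positivity) (pow_pos hAnorm 2)
      refine ⟨hgk1, ?_⟩
      push_cast
      linarith [hst, ihle]
  -- conclusion
  intro k hk
  rcases k with _ | m
  · exact absurd hk (by norm_num)
  · have hγsk : γs (m+1) = γ1/((m:ℝ)+1) := hγs m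
    have hkpos : (0:ℝ) < (m:ℝ)+1 := by positivity
    obtain ⟨hgkt, hple⟩ := main (m+1)
    have hWnn : 0 ≤ (‖A‖^2/(2*γ1)) * ‖xs - xt (m+1)‖^2 := by positivity
    have hS : ((m:ℝ)+1) * (φs (γs (m+1)) (Bop (x (m+1))) + (g (x (m+1))).toReal - Fs)
        ≤ (‖A‖^2/(2*γ1)) * ‖xs - x 0‖^2 := by
      rw [← hxt0]
      push_cast at hple
      linarith [hple, hWnn]
    have hfu := fub (γs (m+1)) (by rw [hγsk]; positivity) (x (m+1))
    have hgc : ((g (x (m+1))).toReal : EReal) = g (x (m+1)) :=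
      EReal.coe_toReal hgkt (hgbot _)
    have hcomb : f (x (m+1)) + g (x (m+1)) - (Fs : EReal)
        ≤ ((φs (γs (m+1)) (Bop (x (m+1))) + γs (m+1)*DU
            + (g (x (m+1))).toReal - Fs : ℝ) : EReal) := by
      have h1 : f (x (m+1)) + g (x (m+1))
          ≤ ((φs (γs (m+1)) (Bop (x (m+1))) + γs (m+1)*DU
              + (g (x (m+1))).toReal : ℝ) : EReal) := by
        calc f (x (m+1)) + g (x (m+1))
            ≤ ((φs (γs (m+1)) (Bop (x (m+1))) + γs (m+1)*DU : ℝ) : EReal)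
              + ((g (x (m+1))).toReal : EReal) := add_le_add hfu (le_of_eq hgc.symm)
          _ = _ := by norm_cast
      calc f (x (m+1)) + g (x (m+1)) - (Fs : EReal)
          ≤ ((φs (γs (m+1)) (Bop (x (m+1))) + γs (m+1)*DU
              + (g (x (m+1))).toReal : ℝ) : EReal) - (Fs : EReal) :=
            EReal.sub_le_sub h1 le_rfl
        _ = _ := by norm_cast
    refine le_trans hcomb ?_
    rw [EReal.coe_le_coe_iff]
    have hSdiv : φs (γs (m+1)) (Bop (x (m+1))) + (g (x (m+1))).toReal - Fs
        ≤ (‖A‖^2/(2*γ1)) * ‖xs - x 0‖^2 / ((m:ℝ)+1) := by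
      rw [le_div_iff₀ hkpos]
      linarith [hS]
    have hlog : 0 ≤ γ1*(Lb - 1)*(Real.log ((m:ℝ)+1) + 1)*DU/((m:ℝ)+1) := by
      apply div_nonneg _ hkpos.le
      have hl : 0 ≤ Real.log ((m:ℝ)+1) := Real.log_nonneg (by linarith)
      have h1 : 0 ≤ γ1*(Lb-1) := mul_nonneg hγ1.le (by linarith)
      have h2 : 0 ≤ Real.log ((m:ℝ)+1) + 1 := by linarith
      have := mul_nonneg (mul_nonneg h1 h2) hDU0
      linarith
    have hterm2 : γs (m+1)*DU ≤ 3*γ1*DU/((m:ℝ)+1) := by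
      rw [hγsk, div_mul_eq_mul_div, div_le_div_iff₀ hkpos hkpos]
      nlinarith [hDU0, hγ1.le, mul_nonneg (mul_nonneg hγ1.le hDU0) hkpos.le]
    have hterm1 : (‖A‖^2/(2*γ1)) * ‖xs - x 0‖^2 / ((m:ℝ)+1)
        = ‖A‖^2*‖x 0 - xs‖^2/(2*γ1*((m:ℝ)+1)) := by
      rw [norm_sub_rev xs (x 0)]
      field_simp [hγ1.ne', hkpos.ne']
    push_cast
    linarith [hSdiv, hterm2, hlog, hterm1.le, hterm1.ge]
end
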